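/- arXiv:1706.04364 — 8 statements merged into one kernel-verified Lean document; each statement's English description precedes it below -/
import Mathlib

section
/- For any commutative ring A and any n ≥ 3, the elementary subgroup E_n(A) is a normal subgroup of GL_n(A). -/
/-- The elementary subgroup `E_n(A) ⊆ GL_n(A)`: the subgroup generated by the
elementary matrices, i.e. the matrices differing from the identity matrix in at most
one nonzero off-diagonal entry. -/
def elementarySubgroup (A : Type*) [CommRing A] (n : ℕ) : Subgroup (GL (Fin n) A) :=
  Subgroup.closure { E : GL (Fin n) A |
    ∃ (i j : Fin n) (c : A), i ≠ j ∧ (E : Matrix (Fin n) (Fin n) A) = Matrix.transvection i j c }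

/-!
Suslin's argument. A conjugate `g (1 + c eᵢeⱼᵀ) g⁻¹` equals `1 + u wᵀ`, where `u = g eᵢ` is
unimodular, say `z ⬝ u = 1`, and `w ⬝ u = 0`. Then `w = ∑ₖₗ wₖ zₗ (uₗ eₖ - uₖ eₗ)`, and each
summand is orthogonal to `u` and, as `n ≥ 3`, vanishes at some third coordinate `m`. Products
of matrices `1 + u vᵀ` with all `v ⬝ u = 0` add up the rank-one parts, so it suffices to treat
a `w` with `w ⬝ u = 0` and `wₘ = 0`. Writing `u = u' + uₘ eₘ` with `u'ₘ = 0`, the matrix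
`1 + u' wᵀ` is the commutator of `1 + u' eₘᵀ` and `1 + eₘ wᵀ`, and these, like `1 + uₘ eₘ wᵀ`,
are products of transvections.
-/

open Matrix

section Ring

variable {R : Type*} [Ring R]

theorem one_add_mul_one_add_of_mul_eq_zero {X Y : R} (h : X * Y = 0) :
    (1 + X) * (1 + Y) = 1 + (X + Y) := by
  rw [add_mul, mul_add, mul_add, h, one_mul, one_mul, mul_one, add_zero, add_assoc,
    add_comm Y X]

theorem one_add_sum_mem_of_mul_eq_zero {S : Submonoid R} {κ : Type*} (s : Finset κ)
    {P : κ → R} (hP : ∀ k l, P k * P l = 0) (hS : ∀ k, 1 + P k ∈ S) :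
    1 + ∑ k ∈ s, P k ∈ S := by
  classical
  induction s using Finset.induction_on with
  | empty => simp [S.one_mem]
  | insert k s hk ih =>
    rw [Finset.sum_insert hk, ← one_add_mul_one_add_of_mul_eq_zero
      (by rw [Finset.mul_sum]; exact Finset.sum_eq_zero fun l _ => hP k l)]
    exact S.mul_mem (hS k) ih

theorem one_add_mul_one_add_mul_one_sub_mul_one_sub {P Q : R} (hPP : P * P = 0)
    (hQQ : Q * Q = 0) (hQP : Q * P = 0) :
    (1 + P) * (1 + Q) * (1 - P) * (1 - Q) = 1 + P * Q := by
  simp only [mul_add, mul_sub, add_mul, sub_mul, one_mul, mul_one, mul_assoc, hPP, hQQ, hQP,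
    mul_zero, add_zero]
  abel

end Ring

namespace Matrix

variable {ι A : Type*} [CommRing A]

theorem vecMulVec_sum {κ : Type*} (s : Finset κ) (u : ι → A) (v : κ → ι → A) :
    vecMulVec u (∑ k ∈ s, v k) = ∑ k ∈ s, vecMulVec u (v k) := by
  ext i j
  simp [vecMulVec_apply, Finset.mul_sum, sum_apply]

theorem sum_vecMulVec {κ : Type*} (s : Finset κ) (u : κ → ι → A) (v : ι → A) :
    vecMulVec (∑ k ∈ s, u k) v = ∑ k ∈ s, vecMulVec (u k) v := by
  ext i j
  simp [vecMulVec_apply, Finset.sum_mul, sum_apply]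

theorem vecMulVec_single_single [DecidableEq ι] (i j : ι) (a b : A) :
    vecMulVec (Pi.single i a) (Pi.single j b) = single i j (a * b) := by
  ext k l
  by_cases hk : k = i <;> by_cases hl : l = j <;> simp [vecMulVec_apply, hk, hl, Ne.symm]

theorem transvection_eq_one_add_vecMulVec [DecidableEq ι] (i j : ι) (c : A) :
    transvection i j c = 1 + vecMulVec (Pi.single i 1) (Pi.single j c) := by
  rw [transvection, vecMulVec_single_single, one_mul]

theorem mul_one_add_vecMulVec_mul [Fintype ι] [DecidableEq ι] {M N : Matrix ι ι A}
    (h : M * N = 1) (a b : ι → A) :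
    M * (1 + vecMulVec a b) * N = 1 + vecMulVec (M *ᵥ a) (b ᵥ* N) := by
  rw [mul_add, add_mul, mul_one, h, mul_vecMulVec, vecMulVec_mul]

theorem sum_sum_smul_single_sub_single [Fintype ι] [DecidableEq ι] (u w z : ι → A) :
    ∑ k, ∑ l, (w k * z l) • (u l • Pi.single k 1 - u k • Pi.single l 1)
      = (z ⬝ᵥ u) • w - (w ⬝ᵥ u) • z := by
  ext i
  simp only [Finset.sum_apply, Pi.sub_apply, Pi.smul_apply, smul_eq_mul, Pi.single_apply,
    mul_sub, Finset.sum_sub_distrib, dotProduct, Finset.sum_mul]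
  simp only [mul_ite, mul_one, mul_zero, Finset.sum_ite_irrel, Finset.sum_const_zero,
    Finset.sum_ite_eq, Finset.mem_univ, if_true]
  congr 1 <;> exact Finset.sum_congr rfl fun _ _ => by ring

end Matrix

def elementaryMatrices (A : Type*) [CommRing A] (n : ℕ) : Submonoid (Matrix (Fin n) (Fin n) A) :=
  (elementarySubgroup A n).toSubmonoid.map (Units.coeHom _)

namespace elementaryMatrices

variable {A : Type*} [CommRing A] {n : ℕ}

theorem transvection_mem {i j : Fin n} (hij : i ≠ j) (c : A) :
    transvection i j c ∈ elementaryMatrices A n := by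
  refine ⟨⟨transvection i j c, transvection i j (-c), ?_, ?_⟩,
    Subgroup.subset_closure ⟨i, j, c, hij, rfl⟩, rfl⟩ <;>
  simp [transvection_mul_transvection_same _ _ hij]

theorem one_add_vecMulVec_single_left_mem (m : Fin n) (c : A) {w : Fin n → A} (hw : w m = 0) :
    1 + vecMulVec (Pi.single m c) w ∈ elementaryMatrices A n := by
  rw [← Finset.univ_sum_single w, vecMulVec_sum]
  refine one_add_sum_mem_of_mul_eq_zero _ (fun k l => ?_) (fun k => ?_)
  · rw [vecMulVec_mul_vecMulVec, single_dotProduct]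
    rcases eq_or_ne k m with rfl | hkm <;> simp [*]
  · rcases eq_or_ne k m with rfl | hkm
    · simp [hw]
    · rw [vecMulVec_single_single, ← transvection]
      exact transvection_mem hkm.symm _

theorem one_add_vecMulVec_single_right_mem (m : Fin n) (c : A) {u : Fin n → A} (hu : u m = 0) :
    1 + vecMulVec u (Pi.single m c) ∈ elementaryMatrices A n := by
  rw [← Finset.univ_sum_single u, sum_vecMulVec]
  refine one_add_sum_mem_of_mul_eq_zero _ (fun k l => ?_) (fun k => ?_)
  · rw [vecMulVec_mul_vecMulVec, single_dotProduct]
    rcases eq_or_ne l m with rfl | hlm <;> simp [*]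
  · rcases eq_or_ne k m with rfl | hkm
    · simp [hu]
    · rw [vecMulVec_single_single, ← transvection]
      exact transvection_mem hkm _

theorem one_add_vecMulVec_mem_of_apply_eq_zero {m : Fin n} {u w : Fin n → A} (hwm : w m = 0)
    (hwu : w ⬝ᵥ u = 0) : 1 + vecMulVec u w ∈ elementaryMatrices A n := by
  set u' := u - Pi.single m (u m)
  have hu'm : u' m = 0 := by simp [u']
  have hwu' : w ⬝ᵥ u' = 0 := by simp [u', dotProduct_sub, hwu, hwm]
  set P := vecMulVec u' (Pi.single m 1)
  set Q := vecMulVec (Pi.single m 1) w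
  have hPP : P * P = 0 := by simp [P, vecMulVec_mul_vecMulVec, hu'm]
  have hQQ : Q * Q = 0 := by simp [Q, vecMulVec_mul_vecMulVec, hwm]
  have hQP : Q * P = 0 := by simp [P, Q, vecMulVec_mul_vecMulVec, hwu']
  have hPQ : P * Q = vecMulVec u' w := by simp [P, Q, vecMulVec_mul_vecMulVec]
  have hdecomp : 1 + vecMulVec u w
      = (1 + P) * (1 + Q) * (1 - P) * (1 - Q) * (1 + vecMulVec (Pi.single m (u m)) w) := by
    rw [one_add_mul_one_add_mul_one_sub_mul_one_sub hPP hQQ hQP, hPQ,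
      one_add_mul_one_add_of_mul_eq_zero (by simp [vecMulVec_mul_vecMulVec, hwm]),
      ← add_vecMulVec, sub_add_cancel]
  rw [hdecomp, sub_eq_add_neg, sub_eq_add_neg, ← vecMulVec_neg, ← neg_vecMulVec, ← Pi.single_neg]
  exact mul_mem (mul_mem (mul_mem (mul_mem
    (one_add_vecMulVec_single_right_mem m 1 hu'm) (one_add_vecMulVec_single_left_mem m 1 hwm))
    (one_add_vecMulVec_single_right_mem m (-1) hu'm))
    (one_add_vecMulVec_single_left_mem m (-1) hwm)) (one_add_vecMulVec_single_left_mem m _ hwm)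

theorem one_add_vecMulVec_mem (hn : 3 ≤ n) {u w z : Fin n → A} (hz : z ⬝ᵥ u = 1)
    (hwu : w ⬝ᵥ u = 0) : 1 + vecMulVec u w ∈ elementaryMatrices A n := by
  set v : Fin n × Fin n → Fin n → A := fun p =>
    (w p.1 * z p.2) • (u p.2 • Pi.single p.1 1 - u p.1 • Pi.single p.2 1)
  have hvu : ∀ p, v p ⬝ᵥ u = 0 := fun p => by
    simp only [v, smul_dotProduct, sub_dotProduct, single_dotProduct, smul_eq_mul]
    ring
  have hw : w = ∑ p, v p := by
    rw [Fintype.sum_prod_type, sum_sum_smul_single_sub_single, hz, hwu, one_smul, zero_smul,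
      sub_zero]
  rw [hw, vecMulVec_sum]
  refine one_add_sum_mem_of_mul_eq_zero _ (fun p q => ?_) (fun p => ?_)
  · rw [vecMulVec_mul_vecMulVec, hvu, zero_smul, vecMulVec_zero]
  · obtain ⟨m, hm₁, hm₂⟩ := Fin.exists_ne_and_ne_of_two_lt p.1 p.2 hn
    refine one_add_vecMulVec_mem_of_apply_eq_zero (m := m) ?_ (hvu p)
    simp [v, hm₁, hm₂]

end elementaryMatrices

namespace elementarySubgroup

variable {A : Type*} [CommRing A] {n : ℕ}

theorem mem_of_val_mem_elementaryMatrices {g : GL (Fin n) A}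
    (hg : (g : Matrix (Fin n) (Fin n) A) ∈ elementaryMatrices A n) :
    g ∈ elementarySubgroup A n := by
  obtain ⟨h, hh, hhg⟩ := hg
  rwa [← Units.ext hhg]

theorem mul_mul_inv_mem_of_val_eq_transvection (hn : 3 ≤ n) (g : GL (Fin n) A)
    {s : GL (Fin n) A} {i j : Fin n} (hij : i ≠ j) {c : A}
    (hs : (s : Matrix (Fin n) (Fin n) A) = transvection i j c) :
    g * s * g⁻¹ ∈ elementarySubgroup A n := by
  refine mem_of_val_mem_elementaryMatrices ?_
  have hdot : ∀ b : Fin n → A,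
      (b ᵥ* (↑g⁻¹ : Matrix (Fin n) (Fin n) A)) ⬝ᵥ ((↑g : Matrix _ _ A) *ᵥ Pi.single i 1) = b i :=
    fun b => by
      rw [dotProduct_mulVec, vecMul_vecMul, ← Units.val_mul, inv_mul_cancel, Units.val_one,
        vecMul_one, dotProduct_single, mul_one]
  rw [Units.val_mul, Units.val_mul, hs, transvection_eq_one_add_vecMulVec,
    mul_one_add_vecMulVec_mul (by rw [← Units.val_mul, mul_inv_cancel, Units.val_one])]
  exact elementaryMatrices.one_add_vecMulVec_mem hn ((hdot _).trans (Pi.single_eq_same i 1))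
    (by rw [hdot, Pi.single_eq_of_ne hij])

end elementarySubgroup

theorem elementarySubgroup_normal (A : Type*) [CommRing A] (n : ℕ) (hn : 3 ≤ n) :
    (elementarySubgroup A n).Normal := by
  refine ⟨fun x hx g => ?_⟩
  have hle : elementarySubgroup A n ≤
      (elementarySubgroup A n).comap (MulAut.conj g).toMonoidHom := by
    refine (Subgroup.closure_le _).2 ?_
    rintro s ⟨i, j, c, hij, hs⟩
    exact elementarySubgroup.mul_mul_inv_mem_of_val_eq_transvection hn g hij hs
  exact hle hx
end

section
/- Let A be a commutative Noetherian ring and let a = (a_1,…,a_n) be a unimodular n-row over A. Then there exists a unimodular n-row b = (b_1,…,b_n) over A such that a and b lie in the same orbit of the E_n(A)-action, and for every i with 1 ≤ i ≤ n, the ideal generated by b_1,…,b_i is either the unit ideal or has height at least i. -/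
/-- A matrix is *elementary* if it differs from the identity matrix in
at most one nonzero off-diagonal entry. -/
def IsElemMat {A : Type*} [CommRing A] {n : ℕ} (E : Matrix (Fin n) (Fin n) A) : Prop :=
  ∃ (i j : Fin n) (c : A), i ≠ j ∧ E = Matrix.transvection i j c

/-- Membership in the elementary group `E_n(A)`: a product of elementary matrices. -/
def IsElementary {A : Type*} [CommRing A] {n : ℕ} (E : Matrix (Fin n) (Fin n) A) : Prop :=
  E ∈ Submonoid.closure { E : Matrix (Fin n) (Fin n) A | IsElemMat E }

/-- A row is unimodular if its entries generate the unit ideal. -/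
def IsUnimodular {A : Type*} [CommRing A] {n : ℕ} (v : Fin n → A) : Prop :=
  Ideal.span (Set.range v) = ⊤

/-- The standard unimodular row `e = (1,0,…,0)`. -/
def stdRow (A : Type*) [CommRing A] (n : ℕ) : Fin n → A := fun i => if i.1 = 0 then 1 else 0

/-- `f` and `g` lie in the same orbit of the right action of `E_n(A)`. -/
def ElemEquiv {A : Type*} [CommRing A] {n : ℕ} (f g : Fin n → A) : Prop :=
  ∃ E : Matrix (Fin n) (Fin n) A, IsElementary E ∧ Matrix.vecMul f E = g

/-- The height of an ideal: the infimum of the heights of the prime ideals containing it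
(equivalently, of the primes minimal over it); the height of the unit ideal is `⊤`. -/
noncomputable def idealHeight {A : Type*} [CommRing A] (I : Ideal A) : ℕ∞ :=
  ⨅ p ∈ { p : PrimeSpectrum A | I ≤ p.asIdeal }, Order.height p

section Aux

variable {A : Type*} [CommRing A] {n : ℕ}

lemma prime_avoidance : ∀ (k : ℕ) (S : Finset (Ideal A)), S.card ≤ k →
    (∀ p ∈ S, p.IsPrime) → ∀ (x : A) (J : Ideal A),
    (∀ p ∈ S, ¬ (x ∈ p ∧ J ≤ p)) → ∃ y ∈ J, ∀ p ∈ S, x + y ∉ p := by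
  classical
  intro k
  induction k with
  | zero =>
    intro S hcard _ x J _
    refine ⟨0, J.zero_mem, ?_⟩
    have : S = ∅ := Finset.card_eq_zero.1 (Nat.le_zero.1 hcard)
    simp [this]
  | succ k IH =>
    intro S hcard hprime x J hxJ
    rcases Finset.eq_empty_or_nonempty S with rfl | ⟨p, hp⟩
    · exact ⟨0, J.zero_mem, by simp⟩
    by_cases hcomp : ∃ q ∈ S, ∃ r ∈ S, q ≠ r ∧ q ≤ r
    · obtain ⟨q, hq, r, hr, hqr, hle⟩ := hcomp
      obtain ⟨y, hyJ, hy⟩ := IH (S.erase q)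
        (by have := Finset.card_erase_lt_of_mem hq; omega)
        (fun p hp => hprime p (Finset.mem_of_mem_erase hp))
        x J (fun p hp => hxJ p (Finset.mem_of_mem_erase hp))
      refine ⟨y, hyJ, fun p hpS => ?_⟩
      by_cases hpq : p = q
      · subst hpq
        intro hmem
        exact hy r (Finset.mem_erase.2 ⟨hqr.symm, hr⟩) (hle hmem)
      · exact hy p (Finset.mem_erase.2 ⟨hpq, hpS⟩)
    · push_neg at hcomp
      obtain ⟨y, hyJ, hy⟩ := IH (S.erase p)
        (by have := Finset.card_erase_lt_of_mem hp; omega)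
        (fun q hq => hprime q (Finset.mem_of_mem_erase hq))
        x J (fun q hq => hxJ q (Finset.mem_of_mem_erase hq))
      by_cases hxy : x + y ∈ p
      · have hpP : p.IsPrime := hprime p hp
        have hz : ∃ z ∈ J, z ∉ p := by
          by_contra h
          push_neg at h
          have hJp : J ≤ p := h
          refine hxJ p hp ⟨?_, hJp⟩
          have hx : x = (x + y) - y := by ring
          rw [hx]; exact p.sub_mem hxy (hJp hyJ)
        obtain ⟨z, hzJ, hzp⟩ := hz
        have hu : ∀ q ∈ S.erase p, ∃ u ∈ q, u ∉ p := by
          intro q hq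
          have hqS := Finset.mem_of_mem_erase hq
          have hne : q ≠ p := (Finset.mem_erase.1 hq).1
          exact SetLike.not_le_iff_exists.1 (hcomp q hqS p hp hne)
        choose u humem hunot using hu
        set w : A := ∏ q ∈ (S.erase p).attach, u q.1 q.2 with hw
        have hwq : ∀ q ∈ S.erase p, w ∈ q := by
          intro q hq
          rw [hw, ← Finset.mul_prod_erase _ _ (Finset.mem_attach _ ⟨q, hq⟩)]
          exact q.mul_mem_right _ (humem q hq)
        have hwp : w ∉ p := by
          rw [hw]
          refine Finset.prod_induction _ (· ∉ p)
            (fun a b ha hb hab => (hpP.mem_or_mem hab).elim ha hb)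
            (fun h1 => hpP.ne_top (Ideal.eq_top_of_isUnit_mem _ h1 isUnit_one)) ?_
          exact fun q _ => hunot q.1 q.2
        refine ⟨y + z * w, J.add_mem hyJ (J.mul_mem_right _ hzJ), fun q hqS => ?_⟩
        by_cases h : q = p
        · subst h
          intro hmem
          have : z * w ∈ q := by
            have hzw : z * w = (x + (y + z * w)) - (x + y) := by ring
            rw [hzw]; exact q.sub_mem hmem hxy
          exact (hpP.mem_or_mem this).elim hzp hwp
        · intro hmem
          have hq' : q ∈ S.erase p := Finset.mem_erase.2 ⟨h, hqS⟩
          refine hy q hq' ?_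
          have hxy' : x + y = (x + (y + z * w)) - z * w := by ring
          rw [hxy']
          exact q.sub_mem hmem (q.mul_mem_left _ (hwq q hq'))
      · exact ⟨y, hyJ, fun q hq => by
          by_cases h : q = p
          · subst h; exact hxy
          · exact hy q (Finset.mem_erase.2 ⟨h, hq⟩)⟩

lemma vecMul_transvection (f : Fin n → A) (j i : Fin n) (c : A) :
    Matrix.vecMul f (Matrix.transvection j i c) = Function.update f i (f i + c * f j) := by
  ext k
  simp only [Matrix.transvection, Matrix.vecMul_add, Matrix.vecMul_one, Pi.add_apply]
  rcases eq_or_ne k i with rfl | hk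
  · simp [Matrix.vecMul, dotProduct, Matrix.single, Finset.sum_ite_eq',
      Function.update_self, mul_comm]
  · rw [Function.update_of_ne hk]
    simp [Matrix.vecMul, dotProduct, Matrix.single, hk.symm]

lemma exists_elem_update (i : Fin n) (c : Fin n → A) (s : Finset (Fin n))
    (hs : ∀ j ∈ s, j ≠ i) :
    ∃ E : Matrix (Fin n) (Fin n) A, IsElementary E ∧
      ∀ f : Fin n → A, Matrix.vecMul f E = Function.update f i (f i + ∑ j ∈ s, c j * f j) := by
  classical
  induction s using Finset.induction with
  | empty =>
    exact ⟨1, Submonoid.one_mem _, fun f => by simp⟩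
  | @insert j s hj IH =>
    obtain ⟨E, hE, hEf⟩ := IH (fun k hk => hs k (Finset.mem_insert_of_mem hk))
    have hji : j ≠ i := hs j (Finset.mem_insert_self j s)
    refine ⟨Matrix.transvection j i (c j) * E,
      Submonoid.mul_mem _ (Submonoid.subset_closure ⟨j, i, c j, hji, rfl⟩) hE, fun f => ?_⟩
    rw [← Matrix.vecMul_vecMul, vecMul_transvection, hEf]
    set g := Function.update f i (f i + c j * f j) with hg
    have hgi : g i = f i + c j * f j := Function.update_self _ _ _
    have hsum : ∑ k ∈ s, c k * g k = ∑ k ∈ s, c k * f k := by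
      refine Finset.sum_congr rfl fun k hk => ?_
      rw [hg, Function.update_of_ne (hs k (Finset.mem_insert_of_mem hk))]
    ext k
    rcases eq_or_ne k i with rfl | hk
    · rw [Function.update_self, Function.update_self, hgi, hsum, Finset.sum_insert hj]
      ring
    · rw [Function.update_of_ne hk, Function.update_of_ne hk, hg, Function.update_of_ne hk]

lemma span_range_update_eq (b : Fin n → A) (i : Fin n) (y : A)
    (hy : y ∈ Ideal.span (b '' {j | j ≠ i})) :
    Ideal.span (Set.range (Function.update b i (b i + y))) = Ideal.span (Set.range b) := by
  set b' := Function.update b i (b i + y) with hb'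
  have himg : b' '' {j | j ≠ i} = b '' {j | j ≠ i} := by
    refine Set.image_congr fun j hj => ?_
    exact Function.update_of_ne hj _ _
  apply le_antisymm
  · rw [Ideal.span_le]
    rintro _ ⟨k, rfl⟩
    rcases eq_or_ne k i with rfl | hk
    · rw [hb', Function.update_self]
      refine Ideal.add_mem _ (Ideal.subset_span ⟨k, rfl⟩) ?_
      exact Ideal.span_mono (Set.image_subset_range _ _) hy
    · rw [hb', Function.update_of_ne hk]
      exact Ideal.subset_span ⟨k, rfl⟩
  · have hyb' : y ∈ Ideal.span (Set.range b') := by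
      have hle : Ideal.span (b '' {j | j ≠ i}) ≤ Ideal.span (Set.range b') := by
        rw [← himg]; exact Ideal.span_mono (Set.image_subset_range _ _)
      exact hle hy
    rw [Ideal.span_le]
    rintro _ ⟨k, rfl⟩
    rcases eq_or_ne k i with rfl | hk
    · have : b k = b' k - y := by rw [hb', Function.update_self]; ring
      rw [this]
      exact Ideal.sub_mem _ (Ideal.subset_span ⟨k, rfl⟩) hyb'
    · have : b k = b' k := (Function.update_of_ne hk _ _).symm
      rw [this]
      exact Ideal.subset_span ⟨k, rfl⟩

end Aux

theorem exists_elemEquiv_row_with_height_condition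
    {A : Type*} [CommRing A] [IsNoetherianRing A] {n : ℕ}
    (a : Fin n → A) (ha : IsUnimodular a) :
    ∃ b : Fin n → A, IsUnimodular b ∧ ElemEquiv a b ∧
      ∀ i : ℕ, 1 ≤ i → i ≤ n →
        Ideal.span (b '' { j : Fin n | (j : ℕ) < i }) = ⊤ ∨
          (i : ℕ∞) ≤ idealHeight (Ideal.span (b '' { j : Fin n | (j : ℕ) < i })) := by
  classical
  suffices H : ∀ m : ℕ, m ≤ n → ∃ b : Fin n → A, IsUnimodular b ∧ ElemEquiv a b ∧
      ∀ i : ℕ, 1 ≤ i → i ≤ m →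
        Ideal.span (b '' { j : Fin n | (j : ℕ) < i }) = ⊤ ∨
          (i : ℕ∞) ≤ idealHeight (Ideal.span (b '' { j : Fin n | (j : ℕ) < i })) by
    exact H n le_rfl
  intro m
  induction m with
  | zero =>
    intro _
    exact ⟨a, ha, ⟨1, Submonoid.one_mem _, Matrix.vecMul_one a⟩,
      fun i h1 h0 => absurd (h0.trans_lt (Nat.lt_of_lt_of_le Nat.zero_lt_one h1)) (lt_irrefl i) ⟩
  | succ m IH =>
    intro hm1
    obtain ⟨b, hbu, hbe, hbc⟩ := IH (Nat.le_of_succ_le hm1)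
    set I := Ideal.span (b '' { j : Fin n | (j : ℕ) < m }) with hIdef
    by_cases hI : I = ⊤
    · refine ⟨b, hbu, hbe, fun i h1 hi => ?_⟩
      rcases eq_or_lt_of_le hi with rfl | h
      · left
        rw [eq_top_iff, ← hI]
        exact Ideal.span_mono (Set.image_mono (fun j hj => lt_trans hj (Nat.lt_succ_self m)))
      · exact hbc i h1 (Nat.lt_succ_iff.1 h)
    · -- the interesting case
      have hmn : m < n := Nat.lt_of_succ_le hm1
      set i₀ : Fin n := ⟨m, hmn⟩ with hi₀
      have hheight : ∀ q : PrimeSpectrum A, I ≤ q.asIdeal → (m : ℕ∞) ≤ Order.height q := by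
        intro q hq
        rcases Nat.eq_zero_or_pos m with rfl | hm0
        · simp
        rcases hbc m hm0 le_rfl with h | h
        · exact absurd h hI
        · refine h.trans ?_
          exact iInf₂_le q hq
      have hfin : I.minimalPrimes.Finite := by
        rw [Ideal.minimalPrimes_eq_comap]
        exact (minimalPrimes.finite_of_isNoetherianRing (A ⧸ I)).image _
      set S : Finset (Ideal A) := hfin.toFinset with hS
      have hSmem : ∀ p, p ∈ S ↔ p ∈ I.minimalPrimes := fun p => hfin.mem_toFinset
      have hSprime : ∀ p ∈ S, p.IsPrime := fun p hp => ((hSmem p).1 hp).1.1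
      set J := Ideal.span (b '' { j : Fin n | m < (j : ℕ) }) with hJ
      have havoid : ∀ p ∈ S, ¬ (b i₀ ∈ p ∧ J ≤ p) := by
        rintro p hpS ⟨hbp, hJp⟩
        have hpmin := (hSmem p).1 hpS
        have hIp : I ≤ p := hpmin.1.2
        have : Ideal.span (Set.range b) ≤ p := by
          rw [Ideal.span_le]
          rintro _ ⟨j, rfl⟩
          rcases lt_trichotomy (j : ℕ) m with h | h | h
          · exact hIp (Ideal.subset_span ⟨j, h, rfl⟩)
          · have : j = i₀ := Fin.ext h
            rw [this]; exact hbp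
          · exact hJp (Ideal.subset_span ⟨j, h, rfl⟩)
        rw [hbu] at this
        exact hpmin.1.1.ne_top (top_le_iff.1 this)
      obtain ⟨y, hyJ, hyavoid⟩ :=
        prime_avoidance S.card S le_rfl hSprime (b i₀) J havoid
      -- write y as a combination of the later entries
      set v : Fin n → A := fun j => if m < (j : ℕ) then b j else 0 with hv
      have hJv : J ≤ Ideal.span (Set.range v) := by
        rw [hJ, Ideal.span_le]
        rintro _ ⟨j, hj, rfl⟩
        have : v j = b j := if_pos hj
        exact this ▸ Ideal.subset_span ⟨j, rfl⟩
      obtain ⟨c, hc⟩ := (Submodule.mem_span_range_iff_exists_fun A).1 (hJv hyJ)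
      set s0 : Finset (Fin n) := Finset.univ.filter (fun j : Fin n => m < (j : ℕ)) with hs0
      have hy' : ∑ j ∈ s0, c j * b j = y := by
        rw [← hc, hs0, Finset.sum_filter]
        refine Finset.sum_congr rfl fun j _ => ?_
        rw [hv, smul_eq_mul]
        by_cases h : m < (j : ℕ) <;> simp [h]
      have hs0i : ∀ j ∈ s0, j ≠ i₀ := by
        intro j hj
        have : m < (j : ℕ) := (Finset.mem_filter.1 hj).2
        intro hji; rw [hji, hi₀] at this; exact lt_irrefl m this
      obtain ⟨E, hEel, hEf⟩ := exists_elem_update i₀ c s0 hs0i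
      set b' := Function.update b i₀ (b i₀ + y) with hb'
      have hbE : Matrix.vecMul b E = b' := by rw [hEf, hy']
      have hymem : y ∈ Ideal.span (b '' {j | j ≠ i₀}) := by
        rw [← hy']
        refine Ideal.sum_mem _ fun j hj => ?_
        exact Ideal.mul_mem_left _ _ (Ideal.subset_span ⟨j, hs0i j hj, rfl⟩)
      have hbu' : IsUnimodular b' := by
        rw [IsUnimodular, hb', span_range_update_eq b i₀ y hymem, ← IsUnimodular]
        exact hbu
      have hbe' : ElemEquiv a b' := by
        obtain ⟨E₀, hE₀, hE₀f⟩ := hbe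
        exact ⟨E₀ * E, Submonoid.mul_mem _ hE₀ hEel, by rw [← Matrix.vecMul_vecMul, hE₀f, hbE]⟩
      have hagree : ∀ k : ℕ, k ≤ m → b' '' { j : Fin n | (j : ℕ) < k } = b '' { j : Fin n | (j : ℕ) < k } := by
        intro k hk
        refine Set.image_congr fun j hj => ?_
        have : j ≠ i₀ := by
          intro h; rw [h, hi₀] at hj; exact absurd hj (by simp; omega)
        exact Function.update_of_ne this _ _
      refine ⟨b', hbu', hbe', fun i h1 hi => ?_⟩
      rcases lt_or_eq_of_le hi with h | rfl
      · rw [hagree i (Nat.lt_succ_iff.1 h)]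
        exact hbc i h1 (Nat.lt_succ_iff.1 h)
      · -- i = m + 1
        right
        unfold idealHeight
        refine le_iInf₂ fun q hq => ?_
        -- hq : span (b' '' {j | j < m+1}) ≤ q.asIdeal
        have hIq : I ≤ q.asIdeal := by
          refine le_trans ?_ hq
          rw [hIdef, ← hagree m le_rfl]
          exact Ideal.span_mono (Set.image_mono (fun j hj => lt_trans hj (Nat.lt_succ_self m)))
        have h1q : (m : ℕ∞) ≤ Order.height q := hheight q hIq
        by_contra hcon
        have hlt : Order.height q < ((m + 1 : ℕ) : ℕ∞) := not_le.1 hcon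
        have hqm : Order.height q = (m : ℕ∞) := by
          set H := Order.height q with hH
          have hne : H ≠ ⊤ := hlt.ne_top
          lift H to ℕ using hne with h hh
          have h2 : h < m + 1 := by exact_mod_cast hlt
          have h3 : m ≤ h := by exact_mod_cast h1q
          have : h = m := by omega
          rw [this]
        obtain ⟨p0, hp0min, hp0le⟩ := Ideal.exists_minimalPrimes_le hIq
        have hp0prime : p0.IsPrime := hp0min.1.1
        set P : PrimeSpectrum A := ⟨p0, hp0prime⟩ with hP
        have hPle : P ≤ q := hp0le
        have hPheight : (m : ℕ∞) ≤ Order.height P := hheight P hp0min.1.2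
        have hPq : P = q := by
          by_contra hne
          have hlt2 : P < q := lt_of_le_of_ne hPle hne
          have hfin2 : Order.height P < ⊤ := by
            refine lt_of_le_of_lt (Order.height_mono hPle) ?_
            rw [hqm]; exact WithTop.coe_lt_top m
          have := Order.height_strictMono hlt2 hfin2
          rw [hqm] at this
          exact absurd hPheight (not_le.2 this)
        have hqS : q.asIdeal ∈ S := by
          rw [hSmem]
          rw [← hPq]
          exact hp0min
        have hbi : b i₀ + y ∈ q.asIdeal := by
          refine hq (Ideal.subset_span ?_)
          refine ⟨i₀, ?_, ?_⟩
          · show (i₀ : ℕ) < m + 1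
            rw [hi₀]; exact Nat.lt_succ_self m
          · rw [hb', Function.update_self]
        exact hyavoid q.asIdeal hqS hbi
end

section
/- Let r, s ≥ 1, let δ_1,…,δ_r ∈ ℤ with δ_1 > 0, and let d_{ij} ∈ ℕ for i = 1,…,s and j = 1,…,r be such that the rows are strictly decreasing in the lexicographic order: (d_{11},…,d_{1r}) > (d_{21},…,d_{2r}) > … > (d_{s1},…,d_{sr}). Suppose for each i = 2,…,s and j = 1,…,r we are given a_{ij}, b_{ij} ∈ ℕ with d_{ij} = a_{ij} + b_{ij}. Then there exist natural numbers c_1 > c_2 > … > c_r ≥ 1 with c_j > δ_j for every j, such that for every i = 2,…,s one has (Σ_{j=1}^r d_{1j} c_j)·δ_1 > Σ_{j=1}^r a_{ij} δ_j + (Σ_{j=1}^r b_{ij} c_j)·δ_1. -/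
/-- The arithmetic core of the lemma on pyramidal degrees. -/
theorem pyramidal_degree_dominance
    (r s : ℕ) (hr : 1 ≤ r) (hs : 1 ≤ s)
    (δ : Fin r → ℤ) (hδ : 0 < δ ⟨0, hr⟩)
    (d : Fin s → Fin r → ℕ)
    (hlex : ∀ i i' : Fin s, i < i' → toLex (d i') < toLex (d i))
    (a b : Fin s → Fin r → ℕ)
    (hab : ∀ i : Fin s, i ≠ ⟨0, hs⟩ → ∀ j, d i j = a i j + b i j) :
    ∃ c : Fin r → ℕ,
      (∀ j j' : Fin r, j < j' → c j' < c j) ∧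
      (∀ j, 1 ≤ c j) ∧
      (∀ j, δ j < (c j : ℤ)) ∧
      ∀ i : Fin s, i ≠ ⟨0, hs⟩ →
        (∑ j, (a i j : ℤ) * δ j) + (∑ j, (b i j : ℤ) * (c j : ℤ)) * δ ⟨0, hr⟩
          < (∑ j, (d ⟨0, hs⟩ j : ℤ) * (c j : ℤ)) * δ ⟨0, hr⟩ := by
  classical
  set D : ℕ := Finset.univ.sup (fun p : Fin s × Fin r => d p.1 p.2) with hD
  set S : ℕ := ∑ i, ∑ j, a i j * (δ j).natAbs with hS
  set T : ℕ := Finset.univ.sup (fun j : Fin r => (δ j).natAbs) with hT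
  set A : ℕ := 1 + S + T with hA
  set M : ℕ := D * r + 2 with hM
  have hM2 : 2 ≤ M := by omega
  have hA1 : 1 ≤ A := by omega
  refine ⟨fun j => A * M ^ (r - 1 - j.val), ?_, ?_, ?_, ?_⟩
  · intro j j' hjj'
    have h1 : j.val < j'.val := hjj'
    have h2 : j'.val < r := j'.isLt
    have hexp : r - 1 - j'.val < r - 1 - j.val := by omega
    exact mul_lt_mul_of_pos_left (Nat.pow_lt_pow_right hM2 hexp) (by omega)
  · intro j
    exact Nat.one_le_iff_ne_zero.mpr (by positivity)
  · intro j
    have h1 : (δ j).natAbs ≤ T := by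
      rw [hT]; exact Finset.le_sup (f := fun j : Fin r => (δ j).natAbs) (Finset.mem_univ j)
    have h2 : (δ j).natAbs < A := by omega
    have h3 : A ≤ A * M ^ (r - 1 - j.val) :=
      Nat.le_mul_of_pos_right A (by positivity)
    calc δ j ≤ ((δ j).natAbs : ℤ) := Int.le_natAbs
      _ < (A : ℤ) := by exact_mod_cast h2
      _ ≤ _ := by exact_mod_cast h3
  · intro i hi
    set c : Fin r → ℕ := fun j => A * M ^ (r - 1 - j.val) with hc
    have h0i : (⟨0, hs⟩ : Fin s) < i := by
      rcases Nat.eq_zero_or_pos i.val with h | h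
      · exact absurd (Fin.ext h) hi
      · exact h
    obtain ⟨j0, hjeq0, hjlt0⟩ := hlex ⟨0, hs⟩ i h0i
    have hjeq : ∀ j : Fin r, j < j0 → d i j = d ⟨0, hs⟩ j := hjeq0
    have hjlt : d i j0 < d ⟨0, hs⟩ j0 := hjlt0
    have hδ1 : (1 : ℤ) ≤ δ ⟨0, hr⟩ := hδ
    have step2 : (∑ j, (a i j : ℤ) * δ j) < (A : ℤ) := by
      have e1 : (∑ j, (a i j : ℤ) * δ j) ≤ ∑ j, (a i j : ℤ) * ((δ j).natAbs : ℤ) :=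
        Finset.sum_le_sum fun j _ =>
          mul_le_mul_of_nonneg_left Int.le_natAbs (by positivity)
      have e2 : (∑ j, a i j * (δ j).natAbs) ≤ S := by
        rw [hS]
        exact Finset.single_le_sum (f := fun i' => ∑ j, a i' j * (δ j).natAbs)
          (fun _ _ => Nat.zero_le _) (Finset.mem_univ i)
      have e3 : ∑ j, (a i j : ℤ) * ((δ j).natAbs : ℤ)
          = ((∑ j, a i j * (δ j).natAbs : ℕ) : ℤ) := by
        push_cast; ring
      have e4 : ((∑ j, a i j * (δ j).natAbs : ℕ) : ℤ) < (A : ℤ) := by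
        exact_mod_cast (by omega : (∑ j, a i j * (δ j).natAbs) < A)
      rw [e3] at e1
      linarith
    have key : A + ∑ j ∈ Finset.Ioi j0, d i j * c j ≤ c j0 := by
      by_cases hlast : j0.val = r - 1
      · have hempty : Finset.Ioi j0 = ∅ := by
          rw [Finset.eq_empty_iff_forall_notMem]
          intro j hj
          have h1 : j0 < j := Finset.mem_Ioi.mp hj
          have h1' : j0.val < j.val := h1
          have h2 : j.val < r := j.isLt
          omega
        have hc0 : c j0 = A := by
          simp [hc, hlast, Nat.sub_self]
        rw [hempty, Finset.sum_empty, hc0]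
        omega
      · have hk : 1 ≤ r - 1 - j0.val := by have := j0.isLt; omega
        set k : ℕ := r - 1 - j0.val with hkdef
        have hbound : ∀ j ∈ Finset.Ioi j0, d i j * c j ≤ D * (A * M ^ (k - 1)) := by
          intro j hj
          have h1 : j0 < j := Finset.mem_Ioi.mp hj
          have h1' : j0.val < j.val := h1
          have hdle : d i j ≤ D := by
            rw [hD]
            exact Finset.le_sup (f := fun p : Fin s × Fin r => d p.1 p.2)
              (Finset.mem_univ (i, j))
          have hcle : c j ≤ A * M ^ (k - 1) := by
            have hle : r - 1 - j.val ≤ k - 1 := by omega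
            exact Nat.mul_le_mul_left A (Nat.pow_le_pow_right (by omega) hle)
          exact Nat.mul_le_mul hdle hcle
        have hsum : ∑ j ∈ Finset.Ioi j0, d i j * c j ≤ r * (D * (A * M ^ (k - 1))) := by
          calc ∑ j ∈ Finset.Ioi j0, d i j * c j
              ≤ ∑ _j ∈ Finset.Ioi j0, D * (A * M ^ (k - 1)) := Finset.sum_le_sum hbound
            _ = (Finset.Ioi j0).card * (D * (A * M ^ (k - 1))) := by
                rw [Finset.sum_const, smul_eq_mul]
            _ ≤ r * (D * (A * M ^ (k - 1))) := by
                apply Nat.mul_le_mul_right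
                calc (Finset.Ioi j0).card ≤ (Finset.univ : Finset (Fin r)).card :=
                      Finset.card_le_card (Finset.subset_univ _)
                  _ = r := Finset.card_univ.trans (Fintype.card_fin r)
        have hcj0 : c j0 = A * M ^ k := rfl
        have hpow : M ^ k = M ^ (k - 1) * M := by
          have hk1 : k - 1 + 1 = k := by omega
          rw [← pow_succ, hk1]
        have hAle : A ≤ A * M ^ (k - 1) := Nat.le_mul_of_pos_right A (by positivity)
        have hexpand : A * M ^ k = A * M ^ (k - 1) * (D * r + 2) := by rw [hpow, hM]; ring
        have h1 : A + ∑ j ∈ Finset.Ioi j0, d i j * c j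
            ≤ A * M ^ (k - 1) + r * (D * (A * M ^ (k - 1))) := Nat.add_le_add hAle hsum
        have h2 : A * M ^ (k - 1) + r * (D * (A * M ^ (k - 1)))
            ≤ A * M ^ (k - 1) * (D * r + 2) := by nlinarith [Nat.zero_le (A * M ^ (k - 1))]
        rw [hcj0, hexpand]
        exact le_trans h1 h2
    have step3 : A + ∑ j, d i j * c j ≤ ∑ j, d ⟨0, hs⟩ j * c j := by
      have hsplit : ∀ f : Fin r → ℕ, ∑ j, f j =
          (∑ j ∈ Finset.Iio j0, f j) + f j0 + ∑ j ∈ Finset.Ioi j0, f j := by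
        intro f
        have h1 : (Finset.univ : Finset (Fin r)) =
            Finset.Iio j0 ∪ {j0} ∪ Finset.Ioi j0 := by
          ext j
          simp only [Finset.mem_univ, Finset.mem_union, Finset.mem_Iio, Finset.mem_singleton,
            Finset.mem_Ioi, true_iff]
          rcases lt_trichotomy j j0 with h | h | h
          · exact Or.inl (Or.inl h)
          · exact Or.inl (Or.inr h)
          · exact Or.inr h
        have hd1 : Disjoint (Finset.Iio j0) ({j0} : Finset (Fin r)) := by
          rw [Finset.disjoint_left]
          intro j hj
          simp only [Finset.mem_Iio] at hj
          simp only [Finset.mem_singleton]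
          exact ne_of_lt hj
        have hd2 : Disjoint (Finset.Iio j0 ∪ {j0}) (Finset.Ioi j0) := by
          rw [Finset.disjoint_left]
          intro j hj
          simp only [Finset.mem_union, Finset.mem_Iio, Finset.mem_singleton] at hj
          simp only [Finset.mem_Ioi]
          intro h'
          rcases hj with h | h
          · exact absurd h (not_lt_of_gt h')
          · exact absurd h (ne_of_gt h')
        rw [h1, Finset.sum_union hd2, Finset.sum_union hd1, Finset.sum_singleton]
      rw [hsplit (fun j => d i j * c j), hsplit (fun j => d ⟨0, hs⟩ j * c j)]
      have heq : ∑ j ∈ Finset.Iio j0, d i j * c j = ∑ j ∈ Finset.Iio j0, d ⟨0, hs⟩ j * c j :=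
        Finset.sum_congr rfl fun j hj => by rw [hjeq j (Finset.mem_Iio.mp hj)]
      have hmid : d i j0 * c j0 + c j0 ≤ d ⟨0, hs⟩ j0 * c j0 := by
        have h1 : d i j0 + 1 ≤ d ⟨0, hs⟩ j0 := hjlt
        calc d i j0 * c j0 + c j0 = (d i j0 + 1) * c j0 := by ring
          _ ≤ d ⟨0, hs⟩ j0 * c j0 := Nat.mul_le_mul_right _ h1
      omega
    have step1 : (∑ j, b i j * c j) ≤ ∑ j, d i j * c j :=
      Finset.sum_le_sum fun j _ => Nat.mul_le_mul_right _ (by rw [hab i hi j]; omega)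
    have step3' : (A : ℤ) + ∑ j, (d i j : ℤ) * (c j : ℤ)
        ≤ ∑ j, (d ⟨0, hs⟩ j : ℤ) * (c j : ℤ) := by exact_mod_cast step3
    have step1' : (∑ j, (b i j : ℤ) * (c j : ℤ)) ≤ ∑ j, (d i j : ℤ) * (c j : ℤ) := by
      exact_mod_cast step1
    set X : ℤ := ∑ j, (b i j : ℤ) * (c j : ℤ) with hX
    set Z : ℤ := ∑ j, (d ⟨0, hs⟩ j : ℤ) * (c j : ℤ) with hZ
    have hZX : (A : ℤ) ≤ Z - X := by linarith
    have hmul : (A : ℤ) * 1 ≤ (Z - X) * δ ⟨0, hr⟩ :=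
      mul_le_mul hZX hδ1 zero_le_one (le_trans (by positivity) hZX)
    nlinarith [hmul, step2]
end

section
/- Consider a commutative square of commutative ring homomorphisms μ : A → A_1, ν : A → A_2, σ : A_1 → A', π : A_2 → A' with σ∘μ = π∘ν, which is a pull-back square (i.e., for every pair (x_1, x_2) ∈ A_1 × A_2 with σ(x_1) = π(x_2) there exists a unique a ∈ A with μ(a) = x_1 and ν(a) = x_2), and suppose that π or σ is surjective. Then the square has the Milnor patching property for unimodular rows: for every n ≥ 1 and every unimodular n-row f over A_1 whose image f' over A' lies in the E_n(A')-orbit of e = (1,0,…,0), there exists a unimodular n-row g over A whose image g' over A_1 lies in the E_n(A_1)-orbit of f. -/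
open Matrix

section Rows

variable {A B : Type*} [CommRing A] [CommRing B] {n : ℕ}

theorem Matrix.transvection_map (ρ : A →+* B) (i j : Fin n) (c : A) :
    (transvection i j c).map ρ = transvection i j (ρ c) := by
  ext a b
  simp [transvection, Matrix.single, Matrix.one_apply, apply_ite ρ]

theorem IsElementary.exists_mul_eq_one {E : Matrix (Fin n) (Fin n) A} (hE : IsElementary E) :
    ∃ E', IsElementary E' ∧ E * E' = 1 := by
  induction hE using Submonoid.closure_induction with
  | mem E hE =>
    obtain ⟨i, j, c, hij, rfl⟩ := hE
    refine ⟨transvection i j (-c), Submonoid.subset_closure ⟨i, j, -c, hij, rfl⟩, ?_⟩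
    rw [transvection_mul_transvection_same _ _ hij, add_neg_cancel, transvection_zero]
  | one => exact ⟨1, Submonoid.one_mem _, mul_one 1⟩
  | mul E F _ _ hE hF =>
    obtain ⟨E', hE', hEE'⟩ := hE
    obtain ⟨F', hF', hFF'⟩ := hF
    refine ⟨F' * E', Submonoid.mul_mem _ hF' hE', ?_⟩
    rw [mul_assoc, ← mul_assoc F, hFF', one_mul, hEE']

theorem IsElementary.exists_map_eq {ρ : A →+* B} (hρ : Function.Surjective ρ)
    {E : Matrix (Fin n) (Fin n) B} (hE : IsElementary E) :
    ∃ F : Matrix (Fin n) (Fin n) A, IsElementary F ∧ F.map ρ = E := by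
  have hgen : {E : Matrix (Fin n) (Fin n) B | IsElemMat E} ⊆
      ρ.mapMatrix.toMonoidHom '' {F | IsElemMat F} := by
    rintro _ ⟨i, j, c, hij, rfl⟩
    obtain ⟨c, rfl⟩ := hρ c
    exact ⟨transvection i j c, ⟨i, j, c, hij, rfl⟩, transvection_map ρ i j c⟩
  have := Submonoid.closure_mono hgen hE
  rw [← MonoidHom.map_mclosure] at this
  obtain ⟨F, hF, rfl⟩ := this
  exact ⟨F, hF, rfl⟩

theorem IsUnimodular.of_vecMul {v : Fin n → A} {M : Matrix (Fin n) (Fin n) A}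
    (h : IsUnimodular (v ᵥ* M)) : IsUnimodular v := by
  rw [IsUnimodular, eq_top_iff, ← h, Ideal.span_le]
  rintro _ ⟨j, rfl⟩
  exact Ideal.mem_span_range_iff_exists_fun.mpr
    ⟨fun i => M i j, by simp [vecMul, dotProduct, mul_comm]⟩

theorem isUnimodular_stdRow (hn : 1 ≤ n) : IsUnimodular (stdRow A n) :=
  (Ideal.eq_top_iff_one _).mpr <| Ideal.subset_span ⟨⟨0, hn⟩, by simp [stdRow]⟩

theorem map_stdRow (ρ : A →+* B) : (fun i => ρ (stdRow A n i)) = stdRow B n := by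
  funext i
  simp [stdRow, apply_ite ρ]

theorem ElemEquiv.refl (v : Fin n → A) : ElemEquiv v v :=
  ⟨1, Submonoid.one_mem _, vecMul_one v⟩

theorem ElemEquiv.symm {v w : Fin n → A} (h : ElemEquiv v w) : ElemEquiv w v := by
  obtain ⟨E, hE, rfl⟩ := h
  obtain ⟨E', hE', hEE'⟩ := hE.exists_mul_eq_one
  exact ⟨E', hE', by rw [vecMul_vecMul, hEE', vecMul_one]⟩

theorem ElemEquiv.isUnimodular_iff {v w : Fin n → A} (h : ElemEquiv v w) :
    IsUnimodular v ↔ IsUnimodular w := by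
  refine ⟨fun hv => ?_, fun hw => ?_⟩
  · obtain ⟨E, -, rfl⟩ := h.symm
    exact hv.of_vecMul
  · obtain ⟨E, -, rfl⟩ := h
    exact hw.of_vecMul

theorem ElemEquiv.exists_lift {ρ : A →+* B} (hρ : Function.Surjective ρ) {v : Fin n → A}
    {w : Fin n → B} (h : ElemEquiv (fun i => ρ (v i)) w) :
    ∃ v', ElemEquiv v v' ∧ (fun i => ρ (v' i)) = w := by
  obtain ⟨E, hE, rfl⟩ := h
  obtain ⟨F, hF, rfl⟩ := hE.exists_map_eq hρ
  exact ⟨v ᵥ* F, ⟨F, hF, rfl⟩, funext fun i => RingHom.map_vecMul ρ F v i⟩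

end Rows

section Pullback

variable {A A₁ A₂ A' : Type*} [CommRing A] [CommRing A₁] [CommRing A₂] [CommRing A']
  {μ : A →+* A₁} {ν : A →+* A₂} {σ : A₁ →+* A'} {π : A₂ →+* A'}

theorem surjective_of_pullback (hglue : ∀ x₁ x₂, σ x₁ = π x₂ → ∃ a, μ a = x₁ ∧ ν a = x₂)
    (hπ : Function.Surjective π) : Function.Surjective μ := fun x₁ =>
  let ⟨x₂, hx₂⟩ := hπ (σ x₁)
  let ⟨a, ha, _⟩ := hglue x₁ x₂ hx₂.symm
  ⟨a, ha⟩

theorem isUnimodular_of_pullback (hcomm : σ.comp μ = π.comp ν)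
    (hglue : ∀ x₁ x₂, σ x₁ = π x₂ → ∃ a, μ a = x₁ ∧ ν a = x₂)
    (hinj : ∀ a b, μ a = μ b → ν a = ν b → a = b) (hπ : Function.Surjective π) {n : ℕ}
    {g : Fin n → A} (h₁ : IsUnimodular fun i => μ (g i)) (h₂ : IsUnimodular fun i => ν (g i)) :
    IsUnimodular g := by
  obtain ⟨s, hsg, hs⟩ : ∃ s ∈ Ideal.span (Set.range g), μ s = 1 := by
    rw [← Ideal.mem_map_iff_of_surjective μ (surjective_of_pullback hglue hπ), Ideal.map_span,
      ← Set.range_comp]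
    exact h₁ ▸ Submodule.mem_top
  obtain ⟨c, hc⟩ := Ideal.mem_span_range_iff_exists_fun.mp (h₂ ▸ Submodule.mem_top : (1 : A₂) ∈ _)
  have hker : ∀ i, σ 0 = π (c i * ν (1 - s)) := by
    simp [← RingHom.comp_apply, ← hcomm, hs]
  choose d hd₁ hd₂ using fun i => hglue 0 _ (hker i)
  have hr : ∑ i, d i * g i = 1 - s := hinj _ _ (by simp [hd₁, hs]) (by
    simp only [map_sum, map_mul, hd₂, mul_right_comm _ (ν (1 - s)), ← Finset.sum_mul, hc, one_mul])
  rw [IsUnimodular, Ideal.eq_top_iff_one, ← add_sub_cancel s 1, ← hr]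
  exact add_mem hsg (Ideal.sum_mem _ fun i _ => Ideal.mul_mem_left _ _ (Ideal.subset_span ⟨i, rfl⟩))

theorem exists_isUnimodular_of_pullback (hcomm : σ.comp μ = π.comp ν)
    (hglue : ∀ x₁ x₂, σ x₁ = π x₂ → ∃ a, μ a = x₁ ∧ ν a = x₂)
    (hinj : ∀ a b, μ a = μ b → ν a = ν b → a = b)
    (hsurj : Function.Surjective π ∨ Function.Surjective σ) {n : ℕ} {x₁ : Fin n → A₁}
    {x₂ : Fin n → A₂} (hx : (fun i => σ (x₁ i)) = fun i => π (x₂ i)) (h₁ : IsUnimodular x₁)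
    (h₂ : IsUnimodular x₂) :
    ∃ g : Fin n → A, IsUnimodular g ∧ (fun i => μ (g i)) = x₁ ∧ (fun i => ν (g i)) = x₂ := by
  choose g hg₁ hg₂ using fun i => hglue _ _ (congrFun hx i)
  obtain rfl : (fun i => μ (g i)) = x₁ := funext hg₁
  obtain rfl : (fun i => ν (g i)) = x₂ := funext hg₂
  refine ⟨g, ?_, rfl, rfl⟩
  rcases hsurj with hπ | hσ
  · exact isUnimodular_of_pullback hcomm hglue hinj hπ h₁ h₂
  · exact isUnimodular_of_pullback hcomm.symm
      (fun x₂ x₁ h => (hglue x₁ x₂ h.symm).imp fun _ => And.symm)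
      (fun a b hν hμ => hinj a b hμ hν) hσ h₂ h₁

end Pullback

theorem milnor_patching_pullback
    {A A₁ A₂ A' : Type*} [CommRing A] [CommRing A₁] [CommRing A₂] [CommRing A']
    (μ : A →+* A₁) (ν : A →+* A₂) (σ : A₁ →+* A') (π : A₂ →+* A')
    (hcomm : σ.comp μ = π.comp ν)
    (hpb : ∀ (x₁ : A₁) (x₂ : A₂), σ x₁ = π x₂ → ∃! a : A, μ a = x₁ ∧ ν a = x₂)
    (hsurj : Function.Surjective π ∨ Function.Surjective σ) :
    ∀ n : ℕ, 1 ≤ n → ∀ f : Fin n → A₁, IsUnimodular f →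
      ElemEquiv (fun i => σ (f i)) (stdRow A' n) →
      ∃ g : Fin n → A, IsUnimodular g ∧ ElemEquiv (fun i => μ (g i)) f := by
  intro n hn f hf hfe
  have hglue : ∀ x₁ x₂, σ x₁ = π x₂ → ∃ a, μ a = x₁ ∧ ν a = x₂ :=
    fun x₁ x₂ h => (hpb x₁ x₂ h).exists
  have hinj : ∀ a b, μ a = μ b → ν a = ν b → a = b := fun a b hμ hν =>
    (hpb (μ a) (ν a) (RingHom.congr_fun hcomm a)).unique ⟨rfl, rfl⟩ ⟨hμ.symm, hν.symm⟩
  have he : IsUnimodular (stdRow A₂ n) := isUnimodular_stdRow hn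
  rcases hsurj with hπ | hσ
  · rw [← map_stdRow π] at hfe
    obtain ⟨f₂, he₂, hπf₂⟩ := hfe.symm.exists_lift hπ
    obtain ⟨g, hg, hμg, -⟩ := exists_isUnimodular_of_pullback hcomm hglue hinj (.inl hπ)
      hπf₂.symm hf (he₂.isUnimodular_iff.mp he)
    exact ⟨g, hg, hμg ▸ ElemEquiv.refl f⟩
  · obtain ⟨f₁, hff₁, hσf₁⟩ := hfe.exists_lift hσ
    obtain ⟨g, hg, hμg, -⟩ := exists_isUnimodular_of_pullback hcomm hglue hinj (.inr hσ)
      (hσf₁.trans (map_stdRow π).symm) (hff₁.isUnimodular_iff.mp hf) he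
    exact ⟨g, hg, hμg ▸ hff₁.symm⟩
end

section
/- Let A be a commutative ring, S ⊆ A a multiplicative subset consisting of nonzerodivisors of A, and ρ : A → B a homomorphism of commutative rings such that ρ(s) is a nonzerodivisor of B for every s ∈ S and such that the induced homomorphism A/sA → B/ρ(s)B is an isomorphism for every s ∈ S (a Karoubi square). Then the square is a pull-back: for every pair (x, y) with x ∈ S^{-1}A, y ∈ B having equal images in ρ(S)^{-1}B, there exists a unique a ∈ A mapping to x in S^{-1}A and to y in B. -/
/-!
Write `x = a / s`. Since `ρ(S)` consists of nonzerodivisors, `B` embeds in `ρ(S)⁻¹B`, so the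
hypothesis says `ρ a = y ρ(s)`. Thus `a` maps to zero in `B / ρ(s)B`, and injectivity of
`A / sA → B / ρ(s)B` gives `a = s a'`; cancelling the nonzerodivisor `ρ(s)` yields `ρ a' = y`.
Uniqueness holds because `A` embeds in `S⁻¹A`.
-/

theorem span_le_comap_span {A B : Type*} [CommRing A] [CommRing B] (ρ : A →+* B) (s : A) :
    Ideal.span {s} ≤ Ideal.comap ρ (Ideal.span {ρ s}) := by
  rw [Ideal.span_le]
  intro x hx
  simp only [Set.mem_singleton_iff] at hx
  subst hx
  exact Ideal.mem_comap.mpr (Ideal.subset_span rfl)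

theorem Ideal.comap_le_of_quotientMap_injective {R S : Type*} [CommRing R] [CommRing S]
    {I : Ideal R} {J : Ideal S} {f : R →+* S} {H : I ≤ J.comap f}
    (hinj : Function.Injective (Ideal.quotientMap J f H)) : J.comap f ≤ I := by
  intro a ha
  rw [← Ideal.Quotient.eq_zero_iff_mem]
  apply hinj
  rwa [Ideal.quotientMap_mk, map_zero, Ideal.Quotient.eq_zero_iff_mem]

theorem exists_mul_eq_and_map_eq_of_map_eq_mul {A B : Type*} [CommRing A] [CommRing B]
    (ρ : A →+* B) {s : A} (hs : ρ s ∈ nonZeroDivisors B)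
    (hinj : Function.Injective
      (Ideal.quotientMap (Ideal.span {ρ s}) ρ (span_le_comap_span ρ s)))
    {a : A} {y : B} (h : ρ a = y * ρ s) : ∃ a', s * a' = a ∧ ρ a' = y := by
  have ha : a ∈ (Ideal.span {ρ s}).comap ρ := by
    rw [Ideal.mem_comap, h]
    exact Ideal.mul_mem_left _ _ (Ideal.mem_span_singleton_self _)
  obtain ⟨a', rfl⟩ :=
    Ideal.mem_span_singleton'.mp (Ideal.comap_le_of_quotientMap_injective hinj ha)
  refine ⟨a', mul_comm _ _, (mul_cancel_right_mem_nonZeroDivisors hs).mp ?_⟩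
  rwa [← map_mul]

/-- A Karoubi square is a pull-back square. -/
theorem karoubi_square_is_pullback
    {A B : Type*} [CommRing A] [CommRing B] (S : Submonoid A) (ρ : A →+* B)
    (hS : S ≤ nonZeroDivisors A)
    (hρS : ∀ s ∈ S, ρ s ∈ nonZeroDivisors B)
    (hiso : ∀ s ∈ S, Function.Bijective
      (Ideal.quotientMap (Ideal.span {ρ s}) ρ (span_le_comap_span ρ s))) :
    ∀ (x : Localization S) (y : B),
      IsLocalization.map (Localization (S.map ρ)) ρ (Submonoid.le_comap_map S) x
        = algebraMap B (Localization (S.map ρ)) y →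
      ∃! a : A, algebraMap A (Localization S) a = x ∧ ρ a = y := by
  intro x y hxy
  obtain ⟨⟨a, s⟩, rfl⟩ := IsLocalization.mk'_surjective S x
  have hSρ : S.map ρ ≤ nonZeroDivisors B := by
    rintro _ ⟨t, ht, rfl⟩
    exact hρS t ht
  have hay : ρ a = y * ρ s := by
    apply IsLocalization.injective (Localization (S.map ρ)) hSρ
    rw [IsLocalization.map_mk', IsLocalization.mk'_eq_iff_eq_mul] at hxy
    rwa [map_mul]
  obtain ⟨a', rfl, ha'y⟩ :=
    exists_mul_eq_and_map_eq_of_map_eq_mul ρ (hρS s s.2) (hiso s s.2).1 hay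
  have ha' : algebraMap A (Localization S) a' = IsLocalization.mk' _ (s * a') s :=
    (IsLocalization.mk'_mul_cancel_left a' s).symm
  exact ⟨a', ⟨ha', ha'y⟩,
    fun b hb => IsLocalization.injective (Localization S) hS (hb.1.trans ha'.symm)⟩
end

section
/- Let A be a commutative ring, S ⊆ A a multiplicative subset of nonzerodivisors, and ρ : A → B a homomorphism of commutative rings such that ρ(s) is a nonzerodivisor of B for every s ∈ S and the induced map A/sA → B/ρ(s)B is an isomorphism for every s ∈ S (a Karoubi square). Then for every n ≥ 3, E_n(ρ(S)^{-1}B) = E_n(B)·E_n(S^{-1}A): every matrix in the elementary subgroup E_n(ρ(S)^{-1}B) can be written as a product ε_1 · ε_2, where ε_1 is the image of a matrix in E_n(B) and ε_2 is the image of a matrix in E_n(S^{-1}A) under the canonical localization maps into ρ(S)^{-1}B. -/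
open Matrix

section Steinberg

variable {ι R : Type*} [DecidableEq ι] [CommRing R]

theorem Matrix.transvection_map_s9 {S : Type*} [CommRing S] (f : R →+* S) (i j : ι) (c : R) :
    (transvection i j c).map f = transvection i j (f c) := by
  simp [transvection, Matrix.map_add]

variable [Fintype ι] {u v k l : ι}

theorem Matrix.transvection_commute (hvk : v ≠ k) (hul : u ≠ l) (x y : R) :
    Commute (transvection u v x) (transvection k l y) := by
  simp only [Commute, SemiconjBy, transvection, add_mul, mul_add, one_mul, mul_one,
    single_mul_single_of_ne, hvk, hul.symm, Ne, not_false_eq_true, add_zero]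
  abel

theorem Matrix.semiconjBy_transvection_of_target_eq_source (hvl : v ≠ l) (hul : u ≠ l) (x y : R) :
    SemiconjBy (transvection u v x) (transvection v l y)
      (transvection u l (x * y) * transvection v l y) := by
  simp only [SemiconjBy, transvection, add_mul, mul_add, one_mul, mul_one,
    single_mul_single_same, single_mul_single_of_ne, hvl.symm, hul.symm, Ne, not_false_eq_true,
    add_zero]
  abel

theorem Matrix.semiconjBy_transvection_of_source_eq_target (huv : u ≠ v) (hkv : k ≠ v)
    (hku : k ≠ u) (x y : R) :
    SemiconjBy (transvection u v x) (transvection k u y)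
      (transvection k u y * transvection k v (-(y * x))) := by
  simp only [SemiconjBy, transvection, add_mul, mul_add, one_mul, mul_one,
    single_mul_single_same, single_mul_single_of_ne, huv.symm, hkv.symm, hku.symm, Ne,
    not_false_eq_true, ← single_neg, mul_neg, neg_mul, neg_zero, add_zero]
  abel

theorem Matrix.transvection_mul_eq_commutator {h : ι} (hvh : v ≠ h) (hhu : h ≠ u) (hvu : v ≠ u)
    (y₁ y₂ : R) :
    transvection v u (y₁ * y₂) = transvection v h y₁ * transvection h u y₂
        * transvection v h (-y₁) * transvection h u (-y₂) := by
  simp only [transvection, add_mul, mul_add, one_mul, mul_one, single_mul_single_same,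
    single_mul_single_of_ne, hvh.symm, hhu.symm, hvu.symm, Ne, not_false_eq_true,
    add_zero, ← single_neg, neg_mul, mul_neg]
  abel

end Steinberg

theorem Submonoid.exists_semiconjBy_of_mem_closure {M : Type*} [Monoid M] {P : Submonoid M}
    {a : M} {s : Set M} (hs : ∀ x ∈ s, ∃ y ∈ P, SemiconjBy a x y) {x : M}
    (hx : x ∈ Submonoid.closure s) : ∃ y ∈ P, SemiconjBy a x y := by
  induction hx using Submonoid.closure_induction with
  | mem x hx => exact hs x hx
  | one => exact ⟨1, P.one_mem, SemiconjBy.one_right a⟩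
  | mul x x' _ _ ih ih' =>
    obtain ⟨y, hy, h⟩ := ih
    obtain ⟨y', hy', h'⟩ := ih'
    exact ⟨y * y', P.mul_mem hy hy', h.mul_right h'⟩

section ElemSubmonoid

variable {ι C : Type*} [Fintype ι] [DecidableEq ι] [CommRing C]

def elemSubmonoid (J : AddSubgroup C) : Submonoid (Matrix ι ι C) :=
  Submonoid.closure {M | ∃ i j, ∃ c ∈ J, i ≠ j ∧ M = transvection i j c}

variable {J J' : AddSubgroup C}

theorem transvection_mem_elemSubmonoid {i j : ι} (hij : i ≠ j) {c : C} (hc : c ∈ J) :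
    transvection i j c ∈ elemSubmonoid J :=
  Submonoid.subset_closure ⟨i, j, c, hc, hij, rfl⟩

theorem elemSubmonoid_mono (h : J ≤ J') :
    (elemSubmonoid J : Submonoid (Matrix ι ι C)) ≤ elemSubmonoid J' :=
  Submonoid.closure_mono fun _ ⟨i, j, c, hc, hij, hM⟩ => ⟨i, j, c, h hc, hij, hM⟩

theorem map_mem_elemSubmonoid_map {D : Type*} [CommRing D] (ψ : C →+* D)
    {M : Matrix ι ι C} (hM : M ∈ elemSubmonoid J) :
    M.map ψ ∈ elemSubmonoid (J.map ψ.toAddMonoidHom) := by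
  induction hM using Submonoid.closure_induction with
  | mem M hM =>
    obtain ⟨i, j, c, hc, hij, rfl⟩ := hM
    rw [transvection_map_s9]
    exact transvection_mem_elemSubmonoid hij ⟨c, hc, rfl⟩
  | one => simp [one_mem]
  | mul M M' _ _ ih ih' => simpa [Matrix.map_mul] using mul_mem ih ih'

theorem exists_semiconjBy_transvection_transvection {u v k l : ι} (huv : u ≠ v) (hkl : k ≠ l)
    (hne : ¬(k = v ∧ l = u)) {x y : C} (hy : y ∈ J) (hxy : x * y ∈ J) :
    ∃ X ∈ elemSubmonoid J, SemiconjBy (transvection u v x) (transvection k l y) X := by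
  by_cases hkv : k = v
  · subst hkv
    have hul : u ≠ l := fun h => hne ⟨rfl, h.symm⟩
    exact ⟨_, mul_mem (transvection_mem_elemSubmonoid hul hxy)
      (transvection_mem_elemSubmonoid hkl hy),
      semiconjBy_transvection_of_target_eq_source hkl hul x y⟩
  by_cases hlu : l = u
  · subst hlu
    refine ⟨_, mul_mem (transvection_mem_elemSubmonoid hkl hy)
      (transvection_mem_elemSubmonoid hkv (neg_mem (mul_comm x y ▸ hxy))),
      semiconjBy_transvection_of_source_eq_target huv hkv hkl x y⟩
  · exact ⟨_, transvection_mem_elemSubmonoid hkl hy,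
      transvection_commute (Ne.symm hkv) (Ne.symm hlu) x y⟩

end ElemSubmonoid

section Fractions

variable {R C : Type*} [CommRing R] [CommRing C] (f : R →+* C)

def imageMultiples (s : R) : AddSubgroup C :=
  (f.toAddMonoidHom.comp (AddMonoidHom.mulLeft s)).range

def fractionsWithDenom (t : R) : AddSubgroup C :=
  f.range.toAddSubgroup.comap (AddMonoidHom.mulRight (f t))

variable {f}

@[simp]
theorem mem_imageMultiples {s : R} {c : C} : c ∈ imageMultiples f s ↔ ∃ r, f (s * r) = c :=
  Iff.rfl

@[simp]
theorem mem_fractionsWithDenom {t : R} {x : C} :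
    x ∈ fractionsWithDenom f t ↔ ∃ a, f a = x * f t :=
  Iff.rfl

theorem imageMultiples_le_range (s : R) : imageMultiples f s ≤ f.range.toAddSubgroup :=
  fun _ ⟨r, hr⟩ => ⟨s * r, hr⟩

theorem imageMultiples_anti {s s' : R} (h : s ∣ s') : imageMultiples f s' ≤ imageMultiples f s := by
  obtain ⟨d, rfl⟩ := h
  rintro _ ⟨r, rfl⟩
  exact ⟨d * r, by simp [mul_assoc]⟩

theorem fractionsWithDenom_mono {t t' : R} (h : t ∣ t') :
    fractionsWithDenom f t ≤ fractionsWithDenom f t' := by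
  obtain ⟨d, rfl⟩ := h
  intro x hx
  obtain ⟨a, ha⟩ := mem_fractionsWithDenom.1 hx
  exact mem_fractionsWithDenom.2 ⟨a * d, by rw [map_mul, map_mul, ha, mul_assoc]⟩

theorem mul_mem_imageMultiples {t s : R} {x c : C} (hx : x ∈ fractionsWithDenom f t)
    (hc : c ∈ imageMultiples f (t * s)) : x * c ∈ imageMultiples f s := by
  obtain ⟨a, ha⟩ := mem_fractionsWithDenom.1 hx
  obtain ⟨r, rfl⟩ := mem_imageMultiples.1 hc
  refine mem_imageMultiples.2 ⟨a * r, ?_⟩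
  simp only [map_mul, ha]
  ring

theorem map_fractionsWithDenom_le {R' D : Type*} [CommRing R'] [CommRing D] {ψ : C →+* D}
    {g : R' →+* D} {h : R →+* R'} (hcomm : ψ.comp f = g.comp h) (t : R) :
    (fractionsWithDenom f t).map ψ.toAddMonoidHom ≤ fractionsWithDenom g (h t) := by
  rintro _ ⟨x, ⟨a, ha⟩, rfl⟩
  have hψ : ∀ r, ψ (f r) = g (h r) := RingHom.congr_fun hcomm
  exact ⟨h a, by simp [← hψ, ha]⟩

end Fractions

section Conjugation

variable {ι R C : Type*} [Fintype ι] [DecidableEq ι] [CommRing R] [CommRing C] {f : R →+* C}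

theorem exists_semiconjBy_transvection_imageMultiples_sq (hι : 3 ≤ Fintype.card ι)
    {u v : ι} (huv : u ≠ v) {t s : R} {x : C} (hx : x ∈ fractionsWithDenom f t)
    {X : Matrix ι ι C} (hX : X ∈ elemSubmonoid (imageMultiples f ((t * s) ^ 2))) :
    ∃ X' ∈ elemSubmonoid (imageMultiples f s), SemiconjBy (transvection u v x) X X' := by
  have conj : ∀ {k l : ι} {y : C}, k ≠ l → ¬(k = v ∧ l = u) → y ∈ imageMultiples f (t * s) →
      ∃ X' ∈ elemSubmonoid (imageMultiples f s),
        SemiconjBy (transvection u v x) (transvection k l y) X' :=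
    fun hkl hne hy => exists_semiconjBy_transvection_transvection huv hkl hne
      (imageMultiples_anti (dvd_mul_left s t) hy) (mul_mem_imageMultiples hx hy)
  refine Submonoid.exists_semiconjBy_of_mem_closure ?_ hX
  rintro _ ⟨k, l, c, hc, hkl, rfl⟩
  by_cases hkl' : k = v ∧ l = u
  swap
  · exact conj hkl hkl' (imageMultiples_anti (dvd_pow_self _ two_ne_zero) hc)
  obtain ⟨rfl, rfl⟩ := hkl'
  -- `e_uv(x)` does not move past `e_vu(c)`, but it does past each factor of
  -- `e_vu((ts)² r) = [e_vh(tsr), e_hu(ts)]` for a third index `h`.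
  obtain ⟨h, hhv, hhu⟩ := ENat.exists_ne_ne_of_three_le (by simpa using hι) k l
  obtain ⟨r, rfl⟩ := mem_imageMultiples.1 hc
  have hy₁ : f (t * s * r) ∈ imageMultiples f (t * s) := ⟨r, rfl⟩
  have hy₂ : f (t * s) ∈ imageMultiples f (t * s) := ⟨1, by simp⟩
  have hne₁ : ¬(k = k ∧ h = l) := fun h' => hhu h'.2
  have hne₂ : ¬(h = k ∧ l = l) := fun h' => hhv h'.1
  rw [show f ((t * s) ^ 2 * r) = f (t * s * r) * f (t * s) by rw [← map_mul]; ring_nf,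
    transvection_mul_eq_commutator (Ne.symm hhv) hhu hkl]
  obtain ⟨X₁, h₁, e₁⟩ := conj (Ne.symm hhv) hne₁ hy₁
  obtain ⟨X₂, h₂, e₂⟩ := conj hhu hne₂ hy₂
  obtain ⟨X₃, h₃, e₃⟩ := conj (Ne.symm hhv) hne₁ (neg_mem hy₁)
  obtain ⟨X₄, h₄, e₄⟩ := conj hhu hne₂ (neg_mem hy₂)
  exact ⟨X₁ * X₂ * X₃ * X₄, mul_mem (mul_mem (mul_mem h₁ h₂) h₃) h₄,
    ((e₁.mul_right e₂).mul_right e₃).mul_right e₄⟩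

theorem exists_semiconjBy_imageMultiples_pow (hι : 3 ≤ Fintype.card ι) {t : R}
    {E : Matrix ι ι C} (hE : E ∈ elemSubmonoid (fractionsWithDenom f t)) (k : ℕ) :
    ∃ N : ℕ, ∀ X ∈ elemSubmonoid (imageMultiples f (t ^ N)),
      ∃ X' ∈ elemSubmonoid (imageMultiples f (t ^ k)), SemiconjBy E X X' := by
  induction hE using Submonoid.closure_induction generalizing k with
  | mem E hE =>
    obtain ⟨u, v, x, hx, huv, rfl⟩ := hE
    refine ⟨2 * k + 2, fun X hX => exists_semiconjBy_transvection_imageMultiples_sq hι huv hx ?_⟩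
    rwa [show (t * t ^ k) ^ 2 = t ^ (2 * k + 2) by ring]
  | one => exact ⟨k, fun X hX => ⟨X, hX, SemiconjBy.one_left X⟩⟩
  | mul E F _ _ ihE ihF =>
    obtain ⟨N₁, h₁⟩ := ihE k
    obtain ⟨N₂, h₂⟩ := ihF N₁
    refine ⟨N₂, fun X hX => ?_⟩
    obtain ⟨X₁, hX₁, e₁⟩ := h₂ X hX
    obtain ⟨X₂, hX₂, e₂⟩ := h₁ X₁ hX₁
    exact ⟨X₂, hX₂, e₂.mul_left e₁⟩

end Conjugation

theorem exists_isElementary_map_eq_of_mem_elemSubmonoid {R C : Type*} [CommRing R] [CommRing C]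
    {f : R →+* C} {J : AddSubgroup C} (hJ : J ≤ f.range.toAddSubgroup) {n : ℕ}
    {X : Matrix (Fin n) (Fin n) C} (hX : X ∈ elemSubmonoid J) :
    ∃ E : Matrix (Fin n) (Fin n) R, IsElementary E ∧ E.map f = X := by
  induction hX using Submonoid.closure_induction with
  | mem X hX =>
    obtain ⟨i, j, c, hc, hij, rfl⟩ := hX
    obtain ⟨r, rfl⟩ := hJ hc
    exact ⟨transvection i j r, Submonoid.subset_closure ⟨i, j, r, hij, rfl⟩,
      transvection_map_s9 f i j r⟩
  | one => exact ⟨1, one_mem _, by simp⟩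
  | mul X Y _ _ ihX ihY =>
    obtain ⟨E, hE, rfl⟩ := ihX
    obtain ⟨F, hF, rfl⟩ := ihY
    exact ⟨E * F, mul_mem hE hF, Matrix.map_mul⟩

theorem exists_mem_elemSubmonoid_fractionsWithDenom {A L : Type*} [CommRing A] [CommRing L]
    [Algebra A L] (S : Submonoid A) [IsLocalization S L] {n : ℕ}
    {E : Matrix (Fin n) (Fin n) L} (hE : IsElementary E) :
    ∃ σ ∈ S, E ∈ elemSubmonoid (fractionsWithDenom (algebraMap A L) σ) := by
  induction hE using Submonoid.closure_induction with
  | mem E hE =>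
    obtain ⟨i, j, c, hij, rfl⟩ := hE
    obtain ⟨⟨a, σ⟩, h⟩ := IsLocalization.surj S c
    exact ⟨σ, σ.2, transvection_mem_elemSubmonoid hij ⟨a, h.symm⟩⟩
  | one => exact ⟨1, S.one_mem, one_mem _⟩
  | mul E F _ _ ihE ihF =>
    obtain ⟨σ, hσ, hE⟩ := ihE
    obtain ⟨τ, hτ, hF⟩ := ihF
    exact ⟨σ * τ, S.mul_mem hσ hτ,
      mul_mem (elemSubmonoid_mono (fractionsWithDenom_mono (dvd_mul_right σ τ)) hE)
        (elemSubmonoid_mono (fractionsWithDenom_mono (dvd_mul_left τ σ)) hF)⟩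

section Karoubi

variable {A B : Type*} [CommRing A] [CommRing B] {S : Submonoid A} {ρ : A →+* B}

theorem exists_eq_add_mul_of_surjective_quotientMap {s : A}
    (h : Function.Surjective (Ideal.quotientMap (Ideal.span {ρ s}) ρ (span_le_comap_span ρ s)))
    (b : B) : ∃ a b', b = ρ a + ρ s * b' := by
  obtain ⟨x, hx⟩ := h (Ideal.Quotient.mk _ b)
  obtain ⟨a, rfl⟩ := Ideal.Quotient.mk_surjective x
  rw [Ideal.quotientMap_mk] at hx
  obtain ⟨b', hb'⟩ := Ideal.mem_span_singleton'.mp (Ideal.Quotient.eq.mp hx)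
  exact ⟨a, -b', by linear_combination hb'⟩

theorem exists_eq_algebraMap_add_map_of_surjective_quotientMap
    (h : ∀ s ∈ S, Function.Surjective
      (Ideal.quotientMap (Ideal.span {ρ s}) ρ (span_le_comap_span ρ s)))
    (z : Localization (S.map ρ)) {σ : A} (hσ : σ ∈ S) :
    ∃ (b : B) (c : Localization S), z = algebraMap B _ (ρ σ * b)
      + IsLocalization.map (Localization (S.map ρ)) ρ (Submonoid.le_comap_map S) c := by
  obtain ⟨⟨b, ⟨_, s, hs, rfl⟩⟩, rfl⟩ := IsLocalization.mk'_surjective (S.map ρ) z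
  obtain ⟨a₁, b₁, rfl⟩ := exists_eq_add_mul_of_surjective_quotientMap (h s hs) b
  obtain ⟨a₂, b₂, rfl⟩ := exists_eq_add_mul_of_surjective_quotientMap (h σ hσ) b₁
  refine ⟨b₂, IsLocalization.mk' _ a₁ ⟨s, hs⟩ + algebraMap A _ a₂, ?_⟩
  rw [map_add, IsLocalization.map_mk', IsLocalization.map_eq, IsLocalization.mk'_eq_iff_eq_mul,
    add_mul, add_mul, IsLocalization.mk'_spec]
  simp only [map_add, map_mul]
  ring

end Karoubi

theorem elementary_decomposition_karoubi_square_general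
    {A B : Type*} [CommRing A] [CommRing B] (S : Submonoid A) (ρ : A →+* B)
    (hiso : ∀ s ∈ S, Function.Bijective
      (Ideal.quotientMap (Ideal.span {ρ s}) ρ (span_le_comap_span ρ s)))
    (n : ℕ) (hn : 3 ≤ n)
    (E : Matrix (Fin n) (Fin n) (Localization (S.map ρ))) (hE : IsElementary E) :
    ∃ (E₁ : Matrix (Fin n) (Fin n) B) (E₂ : Matrix (Fin n) (Fin n) (Localization S)),
      IsElementary E₁ ∧ IsElementary E₂ ∧
      E = (E₁.map (algebraMap B (Localization (S.map ρ)))) *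
          (E₂.map (IsLocalization.map (Localization (S.map ρ)) ρ (Submonoid.le_comap_map S))) := by
  set β := algebraMap B (Localization (S.map ρ))
  set φ : Localization S →+* Localization (S.map ρ) :=
    IsLocalization.map _ ρ (Submonoid.le_comap_map S)
  induction hE using Submonoid.closure_induction_right with
  | one => exact ⟨1, 1, one_mem _, one_mem _, by simp⟩
  | mul_right _ _ T hT ih =>
    obtain ⟨E₁, E₂, h₁, h₂, rfl⟩ := ih
    obtain ⟨i, j, z, hij, rfl⟩ := hT
    obtain ⟨σ, hσ, hE₂⟩ := exists_mem_elemSubmonoid_fractionsWithDenom (L := Localization S) S h₂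
    have hφE₂ : E₂.map φ ∈ elemSubmonoid (fractionsWithDenom β (ρ σ)) :=
      elemSubmonoid_mono (map_fractionsWithDenom_le (IsLocalization.map_comp _) σ)
        (map_mem_elemSubmonoid_map φ hE₂)
    obtain ⟨N, hN⟩ := exists_semiconjBy_imageMultiples_pow (by simpa using hn) hφE₂ 0
    obtain ⟨b, c, rfl⟩ := exists_eq_algebraMap_add_map_of_surjective_quotientMap
      (fun s hs => (hiso s hs).2) z (pow_mem hσ N)
    obtain ⟨X, hX, hcomm⟩ := hN (transvection i j (β (ρ (σ ^ N) * b)))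
      (transvection_mem_elemSubmonoid hij ⟨b, by simp⟩)
    obtain ⟨E', hE', rfl⟩ := exists_isElementary_map_eq_of_mem_elemSubmonoid
      (imageMultiples_le_range _) hX
    refine ⟨E₁ * E', E₂ * transvection i j c, mul_mem h₁ hE',
      mul_mem h₂ (Submonoid.subset_closure ⟨i, j, c, hij, rfl⟩), ?_⟩
    rw [← transvection_mul_transvection_same _ _ hij, Matrix.map_mul, Matrix.map_mul,
      transvection_map_s9, ← mul_assoc, mul_assoc _ (E₂.map φ), hcomm.eq]
    noncomm_ring

/-- For a Karoubi square, `E_n(ρ(S)⁻¹B) = E_n(B) · E_n(S⁻¹A)` for `n ≥ 3`. -/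
theorem elementary_decomposition_karoubi_square
    {A B : Type*} [CommRing A] [CommRing B] (S : Submonoid A) (ρ : A →+* B)
    (hS : S ≤ nonZeroDivisors A)
    (hρS : ∀ s ∈ S, ρ s ∈ nonZeroDivisors B)
    (hiso : ∀ s ∈ S, Function.Bijective
      (Ideal.quotientMap (Ideal.span {ρ s}) ρ (span_le_comap_span ρ s)))
    (n : ℕ) (hn : 3 ≤ n)
    (E : Matrix (Fin n) (Fin n) (Localization (S.map ρ))) (hE : IsElementary E) :
    ∃ (E₁ : Matrix (Fin n) (Fin n) B) (E₂ : Matrix (Fin n) (Fin n) (Localization S)),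
      IsElementary E₁ ∧ IsElementary E₂ ∧
      E = (E₁.map (algebraMap B (Localization (S.map ρ)))) *
          (E₂.map (IsLocalization.map (Localization (S.map ρ)) ρ (Submonoid.le_comap_map S))) :=
  elementary_decomposition_karoubi_square_general S ρ hiso n hn E hE
end

section
/- Let B be a commutative ring, let x, y ∈ B satisfy Bx + By = B, let α ⊆ B be an ideal, and let ν_1,…,ν_p ⊆ B be prime ideals. Suppose that for every element a ∈ α there exists c_0 ∈ ℕ such that x + a·y^c ∈ ν_1 ∪ ⋯ ∪ ν_p for every c ≥ c_0. Then Bx + α ⊆ ν_i for some i ∈ {1,…,p}. -/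
/-!
If `Bx + α ⊄ νᵢ` for every `i`, affine prime avoidance produces `a ∈ α` with `x + a` outside
every `νᵢ`. Affine avoidance itself rests on the fact that a ring is not the union of one coset of
each of finitely many distinct primes: by Neumann's lemma the cosets of infinite index can be
dropped, the remaining primes are maximal, and the Chinese remainder theorem escapes them.

Now pick `D > 0` with `y ^ D ≡ 1` modulo each `νᵢ` in which `y` has finite multiplicative order.
Infinitely many exponents `c ∈ Dℕ` exceed `c₀`, so two of them put `x + a yᶜ` into the same
`νⱼ`. As `y ∉ νⱼ` (because `Bx + By = B`), comparing the two forces `y` to have finite order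
modulo `νⱼ`, whence `yᶜ ≡ 1` and `x + a ∈ νⱼ`, a contradiction.
-/

open scoped Pointwise
open Function

theorem Ideal.IsPrime.isMaximal_of_finiteIndex {R : Type*} [CommRing R] {P : Ideal R}
    (hP : P.IsPrime) [P.toAddSubgroup.FiniteIndex] : P.IsMaximal :=
  have : Finite (R ⧸ P) := AddSubgroup.finite_quotient_of_finiteIndex (H := P.toAddSubgroup)
  Ideal.Quotient.maximal_of_isField P (Finite.isField_of_domain (R ⧸ P))

theorem Ideal.exists_forall_sub_notMem_of_isPrime {R : Type*} [CommRing R]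
    {S : Set (Ideal R)} (hS : S.Finite) (hSp : ∀ P ∈ S, P.IsPrime) (σ : Ideal R → R) :
    ∃ b, ∀ P ∈ S, b - σ P ∉ P := by
  classical
  obtain ⟨s, rfl⟩ := hS.exists_finset_coe
  by_contra! hcov
  have hcovers : ⋃ P ∈ s, σ P +ᵥ (P.toAddSubgroup : Set R) = Set.univ :=
    Set.eq_univ_of_forall fun b ↦ by
      obtain ⟨P, hP, hb⟩ := hcov b
      refine Set.mem_biUnion hP ?_
      rwa [Set.mem_vadd_set_iff_neg_vadd_mem, vadd_eq_add, neg_add_eq_sub]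
  set t := s.filter fun P ↦ P.toAddSubgroup.FiniteIndex
  have hmax (P : t) : (P : Ideal R).IsMaximal :=
    have := (Finset.mem_filter.1 P.2).2
    (hSp P (Finset.mem_filter.1 P.2).1).isMaximal_of_finiteIndex
  have hcoprime : Pairwise (IsCoprime on fun P : t ↦ (P : Ideal R)) := fun P Q hPQ ↦
    Ideal.isCoprime_iff_sup_eq.2 ((hmax P).coprime_of_ne (hmax Q) (Subtype.coe_injective.ne hPQ))
  -- CRT: `z` avoids every finite-index coset, yet those cosets cover `R` by Neumann's lemma
  obtain ⟨z, hz⟩ := Ideal.pi_quotient_surjective hcoprime fun P ↦ Ideal.Quotient.mk _ (σ P + 1)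
  obtain ⟨P, hP, hzP⟩ := Set.mem_iUnion₂.1
    ((AddSubgroup.leftCoset_cover_filter_FiniteIndex hcovers).symm ▸ Set.mem_univ z)
  rw [Set.mem_vadd_set_iff_neg_vadd_mem, vadd_eq_add, neg_add_eq_sub] at hzP
  have hz' := Ideal.Quotient.eq.1 (hz ⟨P, hP⟩)
  refine (hSp P (Finset.mem_filter.1 hP).1).ne_top ((Ideal.eq_top_iff_one _).2 ?_)
  simpa using P.sub_mem (show z - σ P ∈ P from hzP) hz'

theorem Ideal.exists_span_singleton_sup_le_of_forall_add_mem {R ι : Type*} [CommRing R] [Finite ι]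
    {P : ι → Ideal R} (hP : ∀ i, (P i).IsPrime) {x : R} {I : Ideal R}
    (h : ∀ a ∈ I, ∃ i, x + a ∈ P i) : ∃ i, Ideal.span {x} ⊔ I ≤ P i := by
  classical
  by_contra! hcon
  obtain ⟨i₀, -⟩ := h 0 I.zero_mem
  obtain ⟨a, ha, haP⟩ : ∃ a ∈ I, ∀ i, x ∈ P i → a ∉ P i := by
    have hI : ¬(I : Set R) ⊆ ⋃ i ∈ {i | x ∈ P i}, P i := by
      rw [Ideal.subset_union_prime_finite (Set.toFinite _) i₀ i₀ fun i _ _ _ ↦ hP i]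
      rintro ⟨i, hx, hIP⟩
      exact hcon i (sup_le ((Ideal.span_singleton_le_iff_mem _).2 hx) hIP)
    obtain ⟨a, ha, haP⟩ := Set.not_subset.1 hI
    exact ⟨a, ha, fun i hx hai ↦ haP (Set.mem_biUnion hx hai)⟩
  -- the multiples `m * a` with `x + m * a ∈ P` form one coset of `P`, represented by `σ P`
  let σ : Ideal R → R := fun Q ↦ if hQ : ∃ m, x + m * a ∈ Q then hQ.choose else 0
  obtain ⟨m, hm⟩ := Ideal.exists_forall_sub_notMem_of_isPrime (Set.finite_range P)
    (Set.forall_mem_range.2 hP) σ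
  obtain ⟨i, hi⟩ := h (m * a) (I.mul_mem_left m ha)
  have hai : a ∉ P i := fun hai ↦
    haP i (by simpa using (P i).sub_mem hi ((P i).mul_mem_left m hai)) hai
  have hσ : x + σ (P i) * a ∈ P i := by
    have hQ : ∃ m, x + m * a ∈ P i := ⟨m, hi⟩
    simpa only [σ, dif_pos hQ] using hQ.choose_spec
  refine hm (P i) (Set.mem_range_self i) ?_
  refine ((hP i).mem_or_mem ?_).resolve_right hai
  simpa [sub_mul] using (P i).sub_mem hi hσ

theorem exists_pos_forall_pow_eq_one_of_isOfFinOrder {ι : Type*} [Finite ι] {M : ι → Type*}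
    [∀ i, Monoid (M i)] (g : ∀ i, M i) : ∃ D > 0, ∀ i, IsOfFinOrder (g i) → g i ^ D = 1 := by
  classical
  have := Fintype.ofFinite ι
  refine ⟨∏ i ∈ Finset.univ.filter fun i ↦ IsOfFinOrder (g i), orderOf (g i),
    Finset.prod_pos fun i hi ↦ (Finset.mem_filter.1 hi).2.orderOf_pos, fun i hi ↦ ?_⟩
  exact orderOf_dvd_iff_pow_eq_one.1 (Finset.dvd_prod_of_mem _ (by simpa using hi))

theorem isOfFinOrder_of_pow_eq_pow {M : Type*} [MonoidWithZero M] [IsLeftCancelMulZero M]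
    {y : M} (hy : y ≠ 0) {n m : ℕ} (hnm : n ≠ m) (h : y ^ n = y ^ m) : IsOfFinOrder y := by
  wlog hlt : n < m generalizing n m
  · exact this hnm.symm h.symm (by omega)
  refine isOfFinOrder_iff_pow_eq_one.2 ⟨m - n, by omega, mul_left_cancel₀ (pow_ne_zero n hy) ?_⟩
  rw [← pow_add, Nat.add_sub_cancel' hlt.le, h, mul_one]

theorem add_eq_zero_of_add_mul_pow_eq_zero {R : Type*} [CommRing R] [IsDomain R] {x y a : R}
    (hy : y ≠ 0) {D c c' : ℕ} (hD : IsOfFinOrder y → y ^ D = 1) (hc : D ∣ c) (hcc' : c ≠ c')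
    (h : x + a * y ^ c = 0) (h' : x + a * y ^ c' = 0) : x + a = 0 := by
  obtain rfl | ha := eq_or_ne a 0
  · simpa using h
  have hpow : y ^ c = y ^ c' := mul_left_cancel₀ ha (add_left_cancel (h.trans h'.symm))
  obtain ⟨k, rfl⟩ := hc
  simpa [pow_mul, hD (isOfFinOrder_of_pow_eq_pow hy hcc' hpow)] using h

theorem Ideal.IsPrime.add_mem_of_add_mul_pow_mem {R : Type*} [CommRing R] {P : Ideal R}
    (hP : P.IsPrime) {x y a : R} (hxy : Ideal.span {x, y} = ⊤) {D c c' : ℕ}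
    (hD : IsOfFinOrder (Ideal.Quotient.mk P y) → Ideal.Quotient.mk P y ^ D = 1) (hc : D ∣ c)
    (hc0 : 0 < c) (hcc' : c ≠ c') (h : x + a * y ^ c ∈ P) (h' : x + a * y ^ c' ∈ P) :
    x + a ∈ P := by
  have hy : y ∉ P := fun hy ↦ by
    have hx : x ∈ P := by
      simpa using P.sub_mem h (P.mul_mem_left a (P.pow_mem_of_mem hy c hc0))
    exact hP.ne_top (top_unique (hxy ▸ Ideal.span_le.2 (Set.insert_subset hx (by simpa))))
  rw [← Ideal.Quotient.eq_zero_iff_mem] at h h' ⊢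
  simp only [map_add, map_mul, map_pow] at h h' ⊢
  exact add_eq_zero_of_add_mul_pow_eq_zero (mt Ideal.Quotient.eq_zero_iff_mem.1 hy) hD hc hcc' h h'

/-- Co-avoidance lemma: if `x + α y^∞` is contained in a finite union of primes,
then `Bx + α` is contained in one of them. -/
theorem coavoidance
    {B : Type*} [CommRing B] (x y : B) (hxy : Ideal.span {x, y} = ⊤)
    (α : Ideal B) (p : ℕ) (ν : Fin p → Ideal B) (hν : ∀ i, (ν i).IsPrime)
    (h : ∀ a ∈ α, ∃ c₀ : ℕ, ∀ c : ℕ, c₀ ≤ c → ∃ i, x + a * y ^ c ∈ ν i) :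
    ∃ i, Ideal.span {x} ⊔ α ≤ ν i := by
  refine Ideal.exists_span_singleton_sup_le_of_forall_add_mem hν fun a ha ↦ ?_
  obtain ⟨D, hD, hDy⟩ :=
    exists_pos_forall_pow_eq_one_of_isOfFinOrder fun i ↦ Ideal.Quotient.mk (ν i) y
  obtain ⟨c₀, hc₀⟩ := h a ha
  choose j hj using fun t : ℕ ↦ hc₀ (D * (c₀ + 1 + t)) (by nlinarith)
  obtain ⟨t, t', htt', hjt⟩ := Finite.exists_ne_map_eq_of_infinite j
  exact ⟨j t, (hν (j t)).add_mem_of_add_mul_pow_mem hxy (hDy (j t)) (dvd_mul_right D _)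
    (by positivity) (by simpa [hD.ne'] using htt') (hj t) (hjt ▸ hj t')⟩
end

section
/- Let B be a commutative Noetherian ring, let (b_1,…,b_n) be a unimodular n-row over B with n ≥ 2, let y ∈ B satisfy Bb_1 + By = B, and let ν_1,…,ν_p ⊆ B be prime ideals. Then there exist an element b in the ideal Bb_2 + ⋯ + Bb_n and an infinite strictly increasing sequence of natural numbers c_1 < c_2 < ⋯ such that b_1 + b·y^{c_j} ∉ ν_i for every i = 1,…,p and every j ≥ 1. -/
/-!
Coset prime avoidance gives `a ∈ (b₂, …, bₙ)` with `b₁ + a` outside every `νᵢ`, since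
`(b₁) + (b₂, …, bₙ) = B`. Modulo a prime `ν` in which `y` is a root of unity of order `d`,
`b₁ + a yᵏ ≡ b₁ + a` whenever `d ∣ k`; if `y` is not a root of unity modulo `ν`, then, as
`(b₁, y) = B`, `b₁ + a yᵏ ∈ ν` for at most one `k`. So all large multiples of the product
of these orders are admissible exponents.
-/

open Filter

namespace Ideal

variable {R : Type*} [CommRing R]

theorem exists_mem_add_notMem_of_isPrime (I : Ideal R) (x : R) (s : Finset (Ideal R))
    (hs : ∀ P ∈ s, P.IsPrime) (hI : ∀ P ∈ s, x ∈ P → ¬ I ≤ P) :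
    ∃ a ∈ I, ∀ P ∈ s, x + a ∉ P := by
  classical
  induction s using Finset.strongInduction with
  | H s ih =>
  rcases s.eq_empty_or_nonempty with rfl | hne
  · exact ⟨0, I.zero_mem, by simp⟩
  -- Removing a minimal `P` ensures that no remaining prime is contained in `P`.
  obtain ⟨P, hPs, hPmin⟩ := s.exists_minimal hne
  obtain ⟨a, haI, ha⟩ := ih (s.erase P) (s.erase_ssubset hPs)
    (fun Q hQ => hs Q (Finset.mem_of_mem_erase hQ)) (fun Q hQ => hI Q (Finset.mem_of_mem_erase hQ))
  by_cases hxa : x + a ∈ P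
  swap
  · refine ⟨a, haI, fun Q hQ => ?_⟩
    by_cases hQP : Q = P
    · exact hQP ▸ hxa
    · exact ha Q (Finset.mem_erase.2 ⟨hQP, hQ⟩)
  have hP := hs P hPs
  have hprod : ¬ I * (s.erase P).prod id ≤ P := by
    rw [hP.mul_le, hP.prod_le]
    push Not
    refine ⟨fun hIP => hI P hPs (by simpa using P.sub_mem hxa (hIP haI)) hIP, fun Q hQ hQP => ?_⟩
    obtain ⟨hQP', hQs⟩ := Finset.mem_erase.1 hQ
    exact hQP' (le_antisymm hQP (hPmin hQs hQP))
  obtain ⟨e, he, heP⟩ := SetLike.not_le_iff_exists.1 hprod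
  refine ⟨a + e, I.add_mem haI (mul_le_left he), fun Q hQ hxaeQ => ?_⟩
  by_cases hQP : Q = P
  · subst hQP
    exact heP (by simpa using Q.sub_mem hxaeQ hxa)
  · have hQ' : Q ∈ s.erase P := Finset.mem_erase.2 ⟨hQP, hQ⟩
    have heQ : e ∈ Q := (mul_le_right.trans (prod_le_inf.trans (Finset.inf_le hQ'))) he
    exact ha Q hQ' (by convert Q.sub_mem hxaeQ heQ using 1; ring)

theorem IsPrime.exists_pos_eventually_add_mul_pow_notMem {P : Ideal R} (hP : P.IsPrime)
    {x a y : R} (hxy : span {x, y} = ⊤) (hxa : x + a ∉ P) :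
    ∃ d > 0, ∀ᶠ k in atTop, d ∣ k → x + a * y ^ k ∉ P := by
  by_cases hroot : ∃ d > 0, y ^ d - 1 ∈ P
  · obtain ⟨d, hd, hyd⟩ := hroot
    refine ⟨d, hd, Eventually.of_forall fun k ⟨t, ht⟩ hk => hxa ?_⟩
    have hyk : y ^ k - 1 ∈ P := by
      rw [ht, pow_mul]
      exact P.mem_of_dvd (sub_one_dvd_pow_sub_one _ t) hyd
    convert P.sub_mem hk (P.mul_mem_left a hyk) using 1
    ring
  push Not at hroot
  refine ⟨1, one_pos, ?_⟩
  by_cases hbad : ∃ k, x + a * y ^ k ∈ P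
  swap
  · push Not at hbad
    exact Eventually.of_forall fun k _ => hbad k
  -- If `y` is not a root of unity modulo `P`, then `x + a * y ^ k ∈ P` for at most one `k`.
  obtain ⟨k, hk⟩ := hbad
  filter_upwards [eventually_gt_atTop k] with l hkl _ hl
  obtain ⟨m, rfl⟩ := Nat.exists_eq_add_of_lt hkl
  have hdiff : a * y ^ k * (y ^ (m + 1) - 1) ∈ P := by
    convert P.sub_mem hl hk using 1
    ring
  have hay : a * y ^ k ∈ P := (hP.mem_or_mem hdiff).resolve_right (hroot _ m.succ_pos)
  have hx : x ∈ P := by simpa using P.sub_mem hk hay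
  have hy : y ∉ P := fun hy => hP.ne_top <| top_le_iff.1 <| hxy ▸
    span_le.2 (Set.insert_subset hx (Set.singleton_subset_iff.2 hy))
  have ha : a ∈ P := (hP.mem_or_mem hay).resolve_right fun h => hy (hP.mem_of_pow_mem _ h)
  exact hxa (P.add_mem hx ha)

end Ideal

/-- Avoidance corollary for unimodular rows. -/
theorem avoidance_corollary
    {B : Type*} [CommRing B]
    (n : ℕ) (hn : 2 ≤ n) (b : Fin n → B)
    (hb : Ideal.span (Set.range b) = ⊤)
    (y : B) (hy : Ideal.span {b ⟨0, by omega⟩, y} = ⊤)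
    (p : ℕ) (ν : Fin p → Ideal B) (hν : ∀ i, (ν i).IsPrime) :
    ∃ a ∈ Ideal.span (b '' { i : Fin n | (i : ℕ) ≠ 0 }),
      ∃ c : ℕ → ℕ, StrictMono c ∧
        ∀ (i : Fin p) (j : ℕ), b ⟨0, by omega⟩ + a * y ^ (c j) ∉ ν i := by
  classical
  set I := Ideal.span (b '' { i : Fin n | (i : ℕ) ≠ 0 })
  have hcoset : ∀ P ∈ Finset.univ.image ν, b ⟨0, by omega⟩ ∈ P → ¬ I ≤ P := by
    intro _ hP hb₀ hIP
    obtain ⟨i, -, rfl⟩ := Finset.mem_image.1 hP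
    refine (hν i).ne_top (top_le_iff.1 (hb ▸ Ideal.span_le.2 ?_))
    rintro _ ⟨k, rfl⟩
    by_cases hk : (k : ℕ) = 0
    · rwa [show k = ⟨0, by omega⟩ from Fin.ext hk]
    · exact hIP (Ideal.subset_span ⟨k, hk, rfl⟩)
  obtain ⟨a, haI, ha⟩ := I.exists_mem_add_notMem_of_isPrime _ _ (by simpa using hν) hcoset
  choose d hd hev using fun i => (hν i).exists_pos_eventually_add_mul_pow_notMem hy
    (ha _ (Finset.mem_image_of_mem ν (Finset.mem_univ i)))
  have hN : 0 < ∏ i, d i := Finset.prod_pos fun i _ => hd i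
  have hmul : Tendsto (· * ∏ i, d i) atTop atTop :=
    tendsto_atTop_mono (fun m => Nat.le_mul_of_pos_right m hN) tendsto_id
  obtain ⟨φ, hφ, hφgood⟩ := extraction_of_eventually_atTop (hmul.eventually (eventually_all.2 hev))
  exact ⟨a, haI, (φ · * ∏ i, d i), hφ.mul_const hN,
    fun i j => hφgood j i ((Finset.dvd_prod_of_mem d (Finset.mem_univ i)).mul_left _)⟩
end
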